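/- arXiv:2308.14558 — 8 statements merged into one kernel-verified Lean document; each statement's English description precedes it below -/
import Mathlib

section
/- Let G = (V, E) be a finite directed graph with |V| = n, let Q be a finite alphabet with |Q| = q, and let C be a storage code on G. If S ⊆ V is a set of vertices such that the subgraph of G induced by S contains no directed cycle (a DAG set), then the restriction map C → Q^{V \ S} sending each codeword to its values outside S is injective; consequently |C| ≤ q^{n - |S|}, and hence |C| ≤ q^{n - δ(G)}, where δ(G) is the maximum size of a DAG set in G. -/
/-- A storage code on a directed graph with vertex set `V` (edge relation `E`)
over the alphabet `Q`: every codeword symbol is a function of the values on the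
out-neighborhood of the vertex. -/
def IsStorageCode {V Q : Type*} (E : V → V → Prop) (C : Set (V → Q)) : Prop :=
  ∀ v : V, ∃ f : (V → Q) → Q,
    (∀ x y : V → Q, (∀ u : V, E v u → x u = y u) → f x = f y) ∧
    ∀ x ∈ C, f x = x v

/-- There is a directed cycle all of whose vertices lie in `S`. -/
def HasCycleIn {V : Type*} (E : V → V → Prop) (S : Set V) : Prop :=
  ∃ (m : ℕ) (f : Fin (m + 1) → V), 0 < m ∧ (∀ i, f i ∈ S) ∧
    f 0 = f (Fin.last m) ∧ ∀ i : Fin m, E (f i.castSucc) (f i.succ)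

/-- `S` is a DAG set: the induced subgraph on `S` has no directed cycle. -/
def IsDagSet {V : Type*} (E : V → V → Prop) (S : Set V) : Prop := ¬ HasCycleIn E S

/-- δ(G): the maximum size of a DAG set. -/
noncomputable def maxDagSize {V : Type*} [Fintype V] (E : V → V → Prop) : ℕ :=
  sSup {k : ℕ | ∃ S : Finset V, IsDagSet E (↑S : Set V) ∧ S.card = k}

/-!
Since `S` carries no directed cycle and `V` is finite, the relation "`u, v ∈ S` and `v → u`" is
well-founded. Induct along it: the value of a codeword at `v ∈ S` is a function of its values on
the out-neighbours of `v`, each of which lies outside `S` or strictly below `v` in `S`. Hence two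
codewords agreeing off `S` agree everywhere, and `|C| ≤ q ^ |V \ S|`; taking `S` of maximum size
gives the bound with `δ(G)`.
-/

section

variable {V Q : Type*} {E : V → V → Prop} {S : Set V}

lemma hasCycleIn_of_walk_of_eq {g : ℕ → V} (hS : ∀ n, g n ∈ S)
    (hE : ∀ n, E (g n) (g (n + 1))) {i j : ℕ} (hij : i < j) (heq : g i = g j) :
    HasCycleIn E S := by
  refine ⟨j - i, fun k => g (i + k), Nat.sub_pos_of_lt hij, fun k => hS _, ?_, fun k => ?_⟩
  · simpa [Nat.add_sub_cancel' hij.le] using heq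
  · simpa [Nat.add_assoc] using hE (i + k)

lemma IsDagSet.wellFounded [Finite V] (hS : IsDagSet E S) :
    WellFounded (fun u v : V => u ∈ S ∧ v ∈ S ∧ E v u) := by
  refine wellFounded_iff_isEmpty_descending_chain.mpr ⟨fun ⟨g, hg⟩ => hS ?_⟩
  obtain ⟨i, j, hij, heq⟩ :=
    Set.finite_univ.exists_lt_map_eq_of_forall_mem (f := g) fun _ => Set.mem_univ _
  exact hasCycleIn_of_walk_of_eq (fun n => (hg n).2.1) (fun n => (hg n).2.2) hij heq

lemma isDagSet_empty : IsDagSet E (∅ : Set V) := by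
  rintro ⟨_, _, -, hf, -⟩
  exact hf 0

lemma exists_isDagSet_card_eq_maxDagSize [Fintype V] :
    ∃ T : Finset V, IsDagSet E (↑T : Set V) ∧ T.card = maxDagSize E :=
  Nat.sSup_mem (s := {k | ∃ T : Finset V, IsDagSet E (↑T : Set V) ∧ T.card = k})
    ⟨0, ∅, Finset.coe_empty (α := V) ▸ isDagSet_empty, Finset.card_empty⟩
    ⟨Fintype.card V, by rintro k ⟨T, -, rfl⟩; exact T.card_le_univ⟩

lemma IsStorageCode.injOn_restrict_compl [Finite V] {C : Set (V → Q)} (hC : IsStorageCode E C)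
    (hS : IsDagSet E S) :
    Set.InjOn (fun x : V → Q => fun u : {u : V // u ∉ S} => x u) C := by
  intro x hx y hy hxy
  funext v
  induction v using hS.wellFounded.induction with
  | _ v ih =>
    by_cases hv : v ∈ S
    · obtain ⟨f, hf_local, hf_decodes⟩ := hC v
      rw [← hf_decodes x hx, ← hf_decodes y hy]
      refine hf_local x y fun u hu => ?_
      by_cases hu' : u ∈ S
      · exact ih u ⟨hu', hv, hu⟩
      · exact congrFun hxy ⟨u, hu'⟩
    · exact congrFun hxy ⟨v, hv⟩

lemma IsStorageCode.card_le [Fintype V] [Fintype Q] {C : Finset (V → Q)}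
    (hC : IsStorageCode E (↑C : Set (V → Q))) {T : Finset V} (hT : IsDagSet E (↑T : Set V)) :
    C.card ≤ Fintype.card Q ^ (Fintype.card V - T.card) := by
  classical
  calc C.card ≤ (Finset.univ : Finset ({u : V // u ∉ T} → Q)).card :=
        Finset.card_le_card_of_injOn _ (fun _ _ => Finset.mem_univ _) (hC.injOn_restrict_compl hT)
    _ = Fintype.card Q ^ (Fintype.card V - T.card) := by
        simp [Fintype.card_subtype_compl]

end

theorem stmt0 {V Q : Type*} [Fintype V] [Fintype Q] (E : V → V → Prop)
    (n q : ℕ) (hn : Fintype.card V = n) (hq : Fintype.card Q = q)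
    (C : Finset (V → Q)) (hC : IsStorageCode E (↑C : Set (V → Q)))
    (S : Finset V) (hS : IsDagSet E (↑S : Set V)) :
    Set.InjOn (fun x : V → Q => fun u : {u : V // u ∉ S} => x u) (↑C : Set (V → Q)) ∧
    C.card ≤ q ^ (n - S.card) ∧ C.card ≤ q ^ (n - maxDagSize E) := by
  subst hn hq
  obtain ⟨T, hT, hT_card⟩ := exists_isDagSet_card_eq_maxDagSize (E := E)
  exact ⟨hC.injOn_restrict_compl hS, hC.card_le hS, hT_card ▸ hC.card_le hT⟩
end

section
/- Let n ≥ 3 and let G be the undirected graph on vertex set (ℤ/nℤ) × (ℤ/nℤ) in which two distinct vertices (i₁, j₁) and (i₂, j₂) are adjacent if and only if they agree in exactly one of the two coordinates (equivalently, their Hamming distance is 1). Then for every q ≥ 2, the maximum cardinality of a storage code on G over an alphabet of size q equals q^{n² − n}; equivalently, the maximum rate equals 1 − 1/n. -/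
/-- The discrete torus graph on `(ℤ/n) × (ℤ/n)` with full rows and columns as
recovery sets: two distinct vertices are adjacent iff they agree in exactly one
coordinate (Hamming distance 1). The largest storage code over an alphabet of
size `q` has `q ^ (n² − n)` codewords, i.e., the maximum rate is `1 − 1/n`. -/
theorem stmt1 (n q : ℕ) (hn : 3 ≤ n) (hq : 2 ≤ q)
    (Q : Type*) [Fintype Q] (hQ : Fintype.card Q = q) :
    IsGreatest {m : ℕ | ∃ C : Finset ((ZMod n × ZMod n) → Q),
        IsStorageCode (fun v w : ZMod n × ZMod n =>
          (v.1 = w.1 ∧ v.2 ≠ w.2) ∨ (v.1 ≠ w.1 ∧ v.2 = w.2)) (↑C : Set ((ZMod n × ZMod n) → Q))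
        ∧ C.card = m}
      (q ^ (n ^ 2 - n)) := by
  classical
  have hn0 : NeZero n := ⟨by omega⟩
  have hq0 : NeZero q := ⟨by omega⟩
  have ecard : Fintype.card Q = Fintype.card (ZMod q) := by rw [hQ, ZMod.card]
  obtain ⟨e⟩ : Nonempty (Q ≃ ZMod q) := ⟨Fintype.equivOfCardEq ecard⟩
  have key : n ^ 2 - n = n * (n - 1) := by
    obtain ⟨m, rfl⟩ : ∃ m, n = m + 1 := ⟨n - 1, by omega⟩
    simp only [Nat.add_sub_cancel]
    exact Nat.sub_eq_of_eq_add (by ring)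
  constructor
  · -- Existence of a storage code of size q^(n²-n): each row sums to 0 in ZMod q.
    set S := {j : ZMod n // j ≠ 0} with hS
    set Φ : ((ZMod n × S) → ZMod q) → ((ZMod n × ZMod n) → Q) :=
      fun g p => e.symm (if h : p.2 ≠ 0 then g (p.1, ⟨p.2, h⟩)
        else - ∑ j : S, g (p.1, j)) with hΦ
    have hrow : ∀ g (i : ZMod n), ∑ j : ZMod n, e (Φ g (i, j)) = 0 := by
      intro g i
      have h1 : ∀ j : ZMod n, e (Φ g (i, j)) =
          if h : j ≠ 0 then g (i, ⟨j, h⟩) else - ∑ j' : S, g (i, j') := by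
        intro j; simp [hΦ]
      simp only [h1]
      rw [← Finset.add_sum_erase _ _ (Finset.mem_univ (0 : ZMod n)),
        dif_neg (by simp),
        Finset.sum_subtype (p := fun j : ZMod n => j ≠ 0) _ (by simp) _]
      have h2 : ∀ a : S, (if h : a.1 ≠ 0 then g (i, ⟨a.1, h⟩)
          else - ∑ j' : S, g (i, j')) = g (i, a) := fun a => by rw [dif_pos a.2]
      rw [Finset.sum_congr rfl fun a _ => h2 a]
      exact neg_add_cancel _
    have hrow' : ∀ x ∈ Finset.image Φ Finset.univ, ∀ i : ZMod n,
        ∑ j : ZMod n, e (x (i, j)) = 0 := by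
      intro x hx i
      obtain ⟨g, -, rfl⟩ := Finset.mem_image.mp hx
      exact hrow g i
    refine ⟨Finset.image Φ Finset.univ, ?_, ?_⟩
    · intro v
      refine ⟨fun x => e.symm (- ∑ j : {j : ZMod n // j ≠ v.2}, e (x (v.1, j.1))), ?_, ?_⟩
      · intro x y hxy
        have hs : ∑ j : {j : ZMod n // j ≠ v.2}, e (x (v.1, j.1)) =
            ∑ j : {j : ZMod n // j ≠ v.2}, e (y (v.1, j.1)) :=
          Finset.sum_congr rfl fun j _ => by
            rw [hxy (v.1, j.1) (Or.inl ⟨rfl, Ne.symm j.2⟩)]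
        simp only [hs]
      · intro x hx
        have h0 := hrow' x hx v.1
        have h2 : e (x (v.1, v.2)) + ∑ j ∈ Finset.univ.erase v.2, e (x (v.1, j)) = 0 := by
          rw [Finset.add_sum_erase _ (fun j : ZMod n => e (x (v.1, j))) (Finset.mem_univ v.2)]
          exact h0
        have h3 : ∑ j ∈ Finset.univ.erase v.2, e (x (v.1, j)) =
            ∑ j : {j : ZMod n // j ≠ v.2}, e (x (v.1, j.1)) :=
          Finset.sum_subtype _ (by simp) _
        show e.symm (- ∑ j : {j : ZMod n // j ≠ v.2}, e (x (v.1, j.1))) = x v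
        rw [← h3, neg_eq_of_add_eq_zero_left h2]
        exact e.symm_apply_apply _
    · have hinj : Function.Injective Φ := by
        intro g g' h
        funext p
        obtain ⟨i, j, hj⟩ := p
        have h1 := congrFun h (i, j)
        simp only [hΦ, EmbeddingLike.apply_eq_iff_eq, dif_pos hj] at h1
        exact h1
      rw [Finset.card_image_of_injective _ hinj, Finset.card_univ, Fintype.card_fun,
        Fintype.card_prod, ZMod.card, ZMod.card, key]
      congr 1
      have : Fintype.card S = n - 1 := by
        have h1 : Fintype.card {j : ZMod n // ¬ j = 0} =
            Fintype.card (ZMod n) - Fintype.card {j : ZMod n // j = 0} :=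
          Fintype.card_subtype_compl _
        rw [Fintype.card_subtype_eq, ZMod.card] at h1
        exact h1
      rw [this]
  · -- Upper bound: a storage code is determined by its off-diagonal values.
    rintro m ⟨C, hC, rfl⟩
    set r : ((ZMod n × ZMod n) → Q) → ({p : ZMod n × ZMod n // p.1 ≠ p.2} → Q) :=
      fun x p => x p.1 with hr
    have hinj : Set.InjOn r C := by
      intro x hx y hy hxy
      funext p
      by_cases hp : p.1 = p.2
      · obtain ⟨f, hloc, hcor⟩ := hC p
        rw [show x p = x (p.1, p.2) from rfl, show y p = y (p.1, p.2) from rfl]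
        rw [← hcor x hx, ← hcor y hy]
        apply hloc
        intro u hu
        have hne : u.1 ≠ u.2 := by
          rcases hu with ⟨h1, h2⟩ | ⟨h1, h2⟩
          · exact fun heq => h2 (by rw [← hp, h1, heq])
          · exact fun heq => h1 (by rw [hp, h2, heq.symm])
        exact congrFun hxy ⟨u, hne⟩
      · exact congrFun hxy ⟨p, hp⟩
    have hcard : C.card ≤ Fintype.card ({p : ZMod n × ZMod n // p.1 ≠ p.2} → Q) := by
      have := Finset.card_le_card_of_injOn r (fun a _ => Finset.mem_univ (r a)) hinj
      rwa [Finset.card_univ] at this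
    have hsub : Fintype.card {p : ZMod n × ZMod n // p.1 ≠ p.2} = n ^ 2 - n := by
      have hdiag : Fintype.card {p : ZMod n × ZMod n // p.1 = p.2} = n := by
        have hequiv : {p : ZMod n × ZMod n // p.1 = p.2} ≃ ZMod n :=
          ⟨fun p => p.1.1, fun i => ⟨(i, i), rfl⟩,
            fun p => by
              obtain ⟨⟨a, b⟩, h⟩ := p
              cases h
              rfl,
            fun i => rfl⟩
        rw [Fintype.card_congr hequiv, ZMod.card]
      have h1 : Fintype.card {p : ZMod n × ZMod n // ¬ p.1 = p.2} =
          Fintype.card (ZMod n × ZMod n) - Fintype.card {p : ZMod n × ZMod n // p.1 = p.2} :=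
        Fintype.card_subtype_compl _
      rw [hdiag, Fintype.card_prod, ZMod.card] at h1
      rw [h1, pow_two]
    calc C.card ≤ Fintype.card ({p : ZMod n × ZMod n // p.1 ≠ p.2} → Q) := hcard
      _ = q ^ (n ^ 2 - n) := by rw [Fintype.card_fun, hQ, hsub]
end

section
/- Let G = (V, E) be a finite directed graph with |V| = n, let c : V → {1, ..., c₀} be a proper coloring of G (adjacent vertices get distinct colors), and let M₁, ..., M_{c₀} be members of a family of orthogonal partitions of shape (k, s). Define the directed graph Ḡ on vertex set V × {1, ..., s} with an edge from (t, μ) to (t', μ') if and only if (t, t') ∈ E and the set of entries of column μ of M_{c(t)} intersects the set of entries of column μ' of M_{c(t')}. Then for every storage code C on G over a finite alphabet Q there exists a storage code C̄ on Ḡ over the alphabet Q^k with |C̄| = |C|^{ks}; consequently, the rate of C̄ over the alphabet of size q^k equals the rate of C over the alphabet of size q, where q = |Q|. -/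
/-- The set of entries of column `j` of the `k × s` matrix `M`. -/
def colSet {k s : ℕ} (M : Fin k → Fin s → Fin (k * s)) (j : Fin s) : Finset (Fin (k * s)) :=
  Finset.image (fun i => M i j) Finset.univ

/-- A family of orthogonal partitions of shape `(k, s)`, given as a family of
`k × s` matrices over `{1, …, ks}`: each matrix contains every element exactly
once, and for two distinct matrices every column of one intersects exactly `k`
columns of the other, each in exactly one element. -/
def IsOrthogonalFamily {ι : Type*} (k s : ℕ) (M : ι → Fin k → Fin s → Fin (k * s)) : Prop :=
  (∀ a : ι, Function.Bijective (fun p : Fin k × Fin s => M a p.1 p.2)) ∧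
  ∀ a b : ι, a ≠ b →
    (∀ j j' : Fin s, (colSet (M a) j ∩ colSet (M b) j').card ≤ 1) ∧
    (∀ j : Fin s,
      (Finset.univ.filter fun j' : Fin s => (colSet (M a) j ∩ colSet (M b) j').Nonempty).card = k)

/-- The edge relation of the interleaved graph `Ḡ` on `V × {1, …, s}`. -/
def interleavedRel {V : Type*} (E : V → V → Prop) {k s c₀ : ℕ} (c : V → Fin c₀)
    (M : Fin c₀ → Fin k → Fin s → Fin (k * s)) : (V × Fin s) → (V × Fin s) → Prop :=
  fun p p' => E p.1 p'.1 ∧ (colSet (M (c p.1)) p.2 ∩ colSet (M (c p'.1)) p'.2).Nonempty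

/-- Interleaving a storage code `C` on `G` via a family of orthogonal partitions
produces a storage code on `Ḡ` over the alphabet `Q^k` of size `|C|^{ks}`;
consequently the rate is preserved. -/
theorem stmt3 {V Q : Type*} [Fintype V] [Fintype Q] (E : V → V → Prop)
    (k s c₀ : ℕ) (hk : 1 ≤ k) (hks : k ≤ s)
    (c : V → Fin c₀) (hc : ∀ t t' : V, E t t' → c t ≠ c t')
    (M : Fin c₀ → Fin k → Fin s → Fin (k * s)) (hM : IsOrthogonalFamily k s M)
    (C : Finset (V → Q)) (hC : IsStorageCode E (↑C : Set (V → Q))) :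
    ∃ Cbar : Finset ((V × Fin s) → (Fin k → Q)),
      IsStorageCode (interleavedRel E c M) (↑Cbar : Set ((V × Fin s) → (Fin k → Q))) ∧
      Cbar.card = C.card ^ (k * s) ∧
      (1 / ((Fintype.card V : ℝ) * s)) *
          Real.logb ((Fintype.card Q : ℝ) ^ k) (Cbar.card : ℝ) =
        (1 / (Fintype.card V : ℝ)) * Real.logb (Fintype.card Q) (C.card : ℝ) := by

  classical
  set e : Fin c₀ → (Fin k × Fin s ≃ Fin (k * s)) :=
    fun a => Equiv.ofBijective _ (hM.1 a) with he
  have heM : ∀ a (m : Fin (k * s)), M a ((e a).symm m).1 ((e a).symm m).2 = m := by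
    intro a m
    have := (e a).apply_symm_apply m
    simpa [he, Equiv.ofBijective] using this
  set Φ : (Fin (k * s) → (V → Q)) → ((V × Fin s) → (Fin k → Q)) :=
    fun x p i => x (M (c p.1) i p.2) p.1 with hΦ
  have hΦinj : Function.Injective Φ := by
    intro x y hxy
    funext m t
    have h1 := congrFun (congrFun hxy (t, ((e (c t)).symm m).2)) ((e (c t)).symm m).1
    simpa [hΦ, heM] using h1
  refine ⟨Finset.image Φ (Fintype.piFinset fun _ : Fin (k * s) => C), ?_, ?_, ?_⟩
  · -- storage code property
    rintro ⟨t, μ⟩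
    obtain ⟨f, hfloc, hfC⟩ := hC t
    refine ⟨fun z i => f (fun u => z (u, ((e (c u)).symm (M (c t) i μ)).2)
        ((e (c u)).symm (M (c t) i μ)).1), ?_, ?_⟩
    · intro z w hzw
      funext i
      apply hfloc
      intro u hu
      have hrel : interleavedRel E c M (t, μ) (u, ((e (c u)).symm (M (c t) i μ)).2) := by
        refine ⟨hu, ⟨M (c t) i μ, ?_⟩⟩
        simp only [Finset.mem_inter, colSet, Finset.mem_image]
        exact ⟨⟨i, Finset.mem_univ _, rfl⟩,
          ⟨((e (c u)).symm (M (c t) i μ)).1, Finset.mem_univ _, heM _ _⟩⟩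
      rw [hzw _ hrel]
    · intro z hz
      rw [Finset.mem_coe, Finset.mem_image] at hz
      obtain ⟨x, hx, rfl⟩ := hz
      rw [Fintype.mem_piFinset] at hx
      funext i
      have hg : (fun u => Φ x (u, ((e (c u)).symm (M (c t) i μ)).2)
          ((e (c u)).symm (M (c t) i μ)).1) = x (M (c t) i μ) := by
        funext u; simp [hΦ, heM]
      show f (fun u => Φ x (u, ((e (c u)).symm (M (c t) i μ)).2)
          ((e (c u)).symm (M (c t) i μ)).1) = Φ x (t, μ) i
      rw [hg, hfC _ (hx _)]
  · -- cardinality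
    rw [Finset.card_image_of_injective _ hΦinj, Fintype.card_piFinset]
    simp
  · -- rate
    rw [Finset.card_image_of_injective _ hΦinj, Fintype.card_piFinset]
    simp only [Finset.prod_const, Finset.card_univ, Fintype.card_fin]
    have hk' : (k : ℝ) ≠ 0 := Nat.cast_ne_zero.2 (by omega)
    have hs' : (s : ℝ) ≠ 0 := Nat.cast_ne_zero.2 (by omega)
    have hks' : (k : ℝ) * s ≠ 0 := mul_ne_zero hk' hs'
    simp only [Real.logb]
    push_cast
    rw [Real.log_pow, Real.log_pow]
    rw [div_mul_eq_mul_div, div_mul_eq_mul_div, one_mul, one_mul, div_div, div_div]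
    push_cast
    rw [show ((k:ℝ) * Real.log (Fintype.card Q)) * ((Fintype.card V : ℝ) * s)
        = ((k:ℝ) * s) * (Real.log (Fintype.card Q) * (Fintype.card V : ℝ)) by ring]
    rw [show ((k:ℝ) * s) * Real.log (C.card : ℝ)
        = ((k:ℝ) * s) * Real.log (C.card : ℝ) from rfl]
    rw [mul_div_mul_left _ _ hks']
end

section
/- Let G = (V, E) be a finite directed graph with |V| = n that admits a storage code C over an alphabet of size q with |C| = q^{n − δ(G)} (i.e., C achieves the MAIS bound). Let c : V → {1, ..., c₀} be a proper coloring of G, let M₁, ..., M_{c₀} be members of a family of orthogonal partitions of shape (k, s), and let Ḡ be the directed graph on V × {1, ..., s} with an edge from (t, μ) to (t', μ') if and only if (t, t') ∈ E and the entries of column μ of M_{c(t)} intersect the entries of column μ' of M_{c(t')}. Then δ(Ḡ) = s · δ(G); the maximum cardinality of a storage code on Ḡ over any alphabet of size q^k equals q^{k s (n − δ(G))}; and if S is a maximum DAG set of G, then S × {1, ..., s} is a maximum DAG set of Ḡ. -/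
section Aux
open Finset

variable {V : Type*}

lemma isDagSet_subset {E : V → V → Prop} {S T : Set V} (h : S ⊆ T) (hT : IsDagSet E T) :
    IsDagSet E S := by
  rintro ⟨m, f, hm, hf, h0, he⟩
  exact hT ⟨m, f, hm, fun i => h (hf i), h0, he⟩

lemma hasCycleIn_map {V' : Type*} {E : V → V → Prop} {E' : V' → V' → Prop}
    (h : V → V') (hh : ∀ a b, E a b → E' (h a) (h b)) {S : Set V} {S' : Set V'}
    (hmem : ∀ v ∈ S, h v ∈ S') (hc : HasCycleIn E S) : HasCycleIn E' S' := by
  obtain ⟨m, f, hm, hf, h0, he⟩ := hc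
  exact ⟨m, h ∘ f, hm, fun i => hmem _ (hf i), congrArg h h0, fun i => hh _ _ (he i)⟩

lemma exists_sink {E : V → V → Prop} (S : Finset V) (hS : IsDagSet E (↑S : Set V))
    (hne : S.Nonempty) : ∃ v ∈ S, ∀ u ∈ S, ¬ E v u := by
  by_contra hcon
  push_neg at hcon
  have hstep : ∀ v : {x // x ∈ S}, ∃ u : {x // x ∈ S}, E v.1 u.1 := by
    intro v
    obtain ⟨u, hu, he⟩ := hcon v.1 v.2
    exact ⟨⟨u, hu⟩, he⟩
  choose g hg using hstep
  obtain ⟨v0, hv0⟩ := hne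
  obtain ⟨i, j, hij, heq⟩ : ∃ i j, i < j ∧ g^[i] ⟨v0, hv0⟩ = g^[j] ⟨v0, hv0⟩ := by
    obtain ⟨a, b, hab, h⟩ := Finite.exists_ne_map_eq_of_infinite (fun n => g^[n] ⟨v0, hv0⟩)
    rcases lt_or_gt_of_ne hab with h' | h'
    exacts [⟨a, b, h', h⟩, ⟨b, a, h', h.symm⟩]
  apply hS
  refine ⟨j - i, fun l => (g^[i + l.1] ⟨v0, hv0⟩).1, by omega,
    fun l => (g^[i + l.1] ⟨v0, hv0⟩).2, ?_, ?_⟩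
  · have : i + (Fin.last (j - i)).1 = j := by simp [Fin.last]; omega
    simp only [Fin.val_zero, add_zero, this]
    exact congrArg Subtype.val heq
  · intro l
    have h1 : i + l.succ.1 = (i + l.castSucc.1) + 1 := by
      simp [Fin.val_succ, Fin.coe_castSucc]; omega
    show E (g^[i + l.castSucc.1] ⟨v0, hv0⟩).1 (g^[i + l.succ.1] ⟨v0, hv0⟩).1
    rw [h1, Function.iterate_succ_apply']
    exact hg _

lemma code_det {Q : Type*} {E : V → V → Prop} {C : Set (V → Q)} (hC : IsStorageCode E C) :
    ∀ S : Finset V, IsDagSet E (↑S : Set V) →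
      ∀ x ∈ C, ∀ y ∈ C, (∀ u, u ∉ S → x u = y u) → x = y := by
  classical
  intro S
  induction S using Finset.strongInduction with
  | _ S ih =>
    intro hS x hx y hy hagree
    rcases S.eq_empty_or_nonempty with rfl | hne
    · funext u; exact hagree u (Finset.notMem_empty u)
    · obtain ⟨v, hv, hsink⟩ := exists_sink S hS hne
      have hxv : x v = y v := by
        obtain ⟨f, hloc, hval⟩ := hC v
        rw [← hval x hx, ← hval y hy]
        exact hloc x y fun u hu => hagree u fun huS => hsink u huS hu
      refine ih (S.erase v) (Finset.erase_ssubset hv)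
        (isDagSet_subset (Finset.coe_subset.2 (Finset.erase_subset v S)) hS)
        x hx y hy ?_
      intro u hu
      rcases eq_or_ne u v with rfl | hne'
      · exact hxv
      · exact hagree u fun huS => hu (Finset.mem_erase.2 ⟨hne', huS⟩)

lemma dagSizes_nonempty [Fintype V] (E : V → V → Prop) :
    {m : ℕ | ∃ S : Finset V, IsDagSet E (↑S : Set V) ∧ S.card = m}.Nonempty := by
  refine ⟨0, ∅, ?_, rfl⟩
  rintro ⟨m, f, hm, hf, -, -⟩
  simpa using hf 0

lemma dagSizes_bdd [Fintype V] (E : V → V → Prop) :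
    BddAbove {m : ℕ | ∃ S : Finset V, IsDagSet E (↑S : Set V) ∧ S.card = m} := by
  refine ⟨Fintype.card V, ?_⟩
  rintro m ⟨S, -, rfl⟩
  exact S.card_le_univ

lemma maxDagSize_spec [Fintype V] (E : V → V → Prop) :
    ∃ S : Finset V, IsDagSet E (↑S : Set V) ∧ S.card = maxDagSize E :=
  Nat.sSup_mem (dagSizes_nonempty E) (dagSizes_bdd E)

lemma maxDagSize_le_card [Fintype V] (E : V → V → Prop) : maxDagSize E ≤ Fintype.card V := by
  refine csSup_le (dagSizes_nonempty E) ?_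
  rintro m ⟨S, -, rfl⟩
  exact S.card_le_univ

lemma le_maxDagSize [Fintype V] (E : V → V → Prop) (S : Finset V)
    (hS : IsDagSet E (↑S : Set V)) : S.card ≤ maxDagSize E :=
  le_csSup (dagSizes_bdd E) ⟨S, hS, rfl⟩

lemma mais_bound {R : Type*} [Fintype V] [Fintype R] (E : V → V → Prop)
    (C' : Finset (V → R)) (h : IsStorageCode E (↑C' : Set (V → R))) :
    C'.card ≤ Fintype.card R ^ (Fintype.card V - maxDagSize E) := by
  classical
  obtain ⟨S, hS, hcard⟩ := maxDagSize_spec E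
  have hle : C'.card ≤ (Finset.univ : Finset ({x // x ∈ Sᶜ} → R)).card := by
    refine Finset.card_le_card_of_injOn (fun x u => x u.1) (fun _ _ => Finset.mem_univ _) ?_
    intro x hx y hy hxy
    refine code_det h S hS x hx y hy ?_
    intro u hu
    exact congrFun hxy ⟨u, Finset.mem_compl.2 hu⟩
  calc C'.card ≤ _ := hle
    _ = Fintype.card R ^ (Fintype.card V - maxDagSize E) := by
        rw [Finset.card_univ, Fintype.card_fun, Fintype.card_coe, Finset.card_compl, hcard]

end Aux

section Interleave
open Finset

variable {V Q Q' : Type*} {k s c₀ : ℕ}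

noncomputable def pinv {A : Fin k → Fin s → Fin (k * s)}
    (hb : Function.Bijective fun p : Fin k × Fin s => A p.1 p.2) (r : Fin (k * s)) :
    Fin k × Fin s := (Equiv.ofBijective _ hb).symm r

lemma pinv_spec {A : Fin k → Fin s → Fin (k * s)}
    (hb : Function.Bijective fun p : Fin k × Fin s => A p.1 p.2) (r : Fin (k * s)) :
    A (pinv hb r).1 (pinv hb r).2 = r :=
  (Equiv.ofBijective _ hb).apply_symm_apply r

lemma pinv_apply {A : Fin k → Fin s → Fin (k * s)}
    (hb : Function.Bijective fun p : Fin k × Fin s => A p.1 p.2) (i : Fin k) (j : Fin s) :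
    pinv hb (A i j) = (i, j) :=
  (Equiv.ofBijective _ hb).symm_apply_apply (i, j)

lemma mem_colSet_pinv {A : Fin k → Fin s → Fin (k * s)}
    (hb : Function.Bijective fun p : Fin k × Fin s => A p.1 p.2) (r : Fin (k * s)) :
    r ∈ colSet A (pinv hb r).2 :=
  Finset.mem_image.2 ⟨(pinv hb r).1, Finset.mem_univ _, pinv_spec hb r⟩

lemma mem_colSet_self (A : Fin k → Fin s → Fin (k * s)) (i : Fin k) (j : Fin s) :
    A i j ∈ colSet A j :=
  Finset.mem_image.2 ⟨i, Finset.mem_univ _, rfl⟩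

variable (E : V → V → Prop) (c : V → Fin c₀) (M : Fin c₀ → Fin k → Fin s → Fin (k * s))
  (hbij : ∀ a, Function.Bijective fun p : Fin k × Fin s => M a p.1 p.2)

lemma interleaved_hom {t t' : V} (h : E t t') (r : Fin (k * s)) :
    interleavedRel E c M (t, (pinv (hbij (c t)) r).2) (t', (pinv (hbij (c t')) r).2) :=
  ⟨h, ⟨r, Finset.mem_inter.2 ⟨mem_colSet_pinv _ r, mem_colSet_pinv _ r⟩⟩⟩

include hbij in
lemma card_dag_interleaved_le [Fintype V] (hk : 1 ≤ k)
    (T : Finset (V × Fin s)) (hT : IsDagSet (interleavedRel E c M) (↑T : Set (V × Fin s))) :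
    T.card ≤ s * maxDagSize E := by
  classical
  set φ : V → Fin (k * s) → Fin s := fun t r => (pinv (hbij (c t)) r).2 with hφ
  have hA : ∀ r : Fin (k * s),
      (univ.filter fun t : V => (t, φ t r) ∈ T).card ≤ maxDagSize E := by
    intro r
    refine le_maxDagSize E _ ?_
    intro hcyc
    refine hT (hasCycleIn_map (fun t => (t, φ t r)) ?_ ?_ hcyc)
    · intro a b hab
      exact interleaved_hom E c M hbij hab r
    · intro v hv
      have : v ∈ univ.filter fun t : V => (t, φ t r) ∈ T := hv
      simpa using (Finset.mem_filter.1 this).2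
  set P : Finset (Fin (k * s) × V) :=
    univ.filter (fun p : Fin (k * s) × V => (p.2, φ p.2 p.1) ∈ T) with hP
  have h1 : P.card = ∑ r : Fin (k * s), (univ.filter fun t : V => (t, φ t r) ∈ T).card := by
    rw [Finset.card_eq_sum_card_fiberwise (f := Prod.fst) (t := univ) (fun x _ => mem_univ _)]
    refine Finset.sum_congr rfl fun r _ => ?_
    refine Finset.card_bij' (fun p _ => p.2) (fun t _ => (r, t)) ?_ ?_ ?_ ?_
    · intro p hp
      obtain ⟨hp1, hp2⟩ := Finset.mem_filter.1 hp
      obtain ⟨-, hp1⟩ := Finset.mem_filter.1 hp1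
      subst hp2
      exact Finset.mem_filter.2 ⟨mem_univ _, hp1⟩
    · intro t ht
      exact Finset.mem_filter.2 ⟨Finset.mem_filter.2 ⟨mem_univ _, (Finset.mem_filter.1 ht).2⟩, rfl⟩
    · intro p hp
      obtain ⟨-, hp2⟩ := Finset.mem_filter.1 hp
      exact Prod.ext hp2.symm rfl
    · intro t ht
      rfl
  have h2 : P.card = k * T.card := by
    have : k * T.card = ((univ : Finset (Fin k)) ×ˢ T).card := by
      rw [Finset.card_product, Finset.card_univ, Fintype.card_fin]
    rw [this]
    refine Finset.card_bij' (fun p hp => ((pinv (hbij (c p.2)) p.1).1, (p.2, φ p.2 p.1)))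
      (fun q _ => (M (c q.2.1) q.1 q.2.2, q.2.1)) ?_ ?_ ?_ ?_
    · intro p hp
      exact Finset.mem_product.2 ⟨mem_univ _, (Finset.mem_filter.1 hp).2⟩
    · intro q hq
      refine Finset.mem_filter.2 ⟨mem_univ _, ?_⟩
      have : φ q.2.1 (M (c q.2.1) q.1 q.2.2) = q.2.2 := by
        simp only [hφ, pinv_apply]
      rw [this]
      exact (Finset.mem_product.1 hq).2
    · intro p hp
      have : M (c p.2) (pinv (hbij (c p.2)) p.1).1 (φ p.2 p.1) = p.1 := pinv_spec _ _
      exact Prod.ext this rfl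
    · intro q hq
      have h3 : pinv (hbij (c q.2.1)) (M (c q.2.1) q.1 q.2.2) = (q.1, q.2.2) :=
        pinv_apply _ _ _
      simp only [hφ, h3]
  have h4 : k * T.card ≤ k * (s * maxDagSize E) := by
    rw [← h2, h1]
    calc ∑ r : Fin (k * s), (univ.filter fun t : V => (t, φ t r) ∈ T).card
        ≤ ∑ _r : Fin (k * s), maxDagSize E := Finset.sum_le_sum fun r _ => hA r
      _ = (k * s) * maxDagSize E := by rw [Finset.sum_const, card_univ, Fintype.card_fin, smul_eq_mul]
      _ = k * (s * maxDagSize E) := mul_assoc _ _ _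
  exact Nat.le_of_mul_le_mul_left h4 hk

lemma prod_dag (S : Finset V) (hS : IsDagSet E (↑S : Set V)) :
    IsDagSet (interleavedRel E c M)
      (↑(S ×ˢ (univ : Finset (Fin s))) : Set (V × Fin s)) := by
  intro hcyc
  apply hS
  refine hasCycleIn_map Prod.fst (fun a b h => h.1) ?_ hcyc
  intro v hv
  exact (Finset.mem_product.1 (Finset.mem_coe.1 hv)).1

end Interleave

section Map
open Finset

variable {V Q Q' : Type*} {k s c₀ : ℕ}

def interleaveMap (e : Q' ≃ (Fin k → Q)) (c : V → Fin c₀)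
    (M : Fin c₀ → Fin k → Fin s → Fin (k * s)) (x : Fin (k * s) → V → Q) :
    (V × Fin s) → Q' :=
  fun p => e.symm fun i => x (M (c p.1) i p.2) p.1

variable (e : Q' ≃ (Fin k → Q)) (c : V → Fin c₀) (M : Fin c₀ → Fin k → Fin s → Fin (k * s))
  (hbij : ∀ a, Function.Bijective fun p : Fin k × Fin s => M a p.1 p.2)

include hbij in
lemma interleaveMap_rec (x : Fin (k * s) → V → Q) (r : Fin (k * s)) (t : V) :
    e (interleaveMap e c M x (t, (pinv (hbij (c t)) r).2)) (pinv (hbij (c t)) r).1 = x r t := by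
  show e (e.symm _) _ = _
  rw [Equiv.apply_symm_apply]
  show x (M (c t) (pinv (hbij (c t)) r).1 (pinv (hbij (c t)) r).2) t = x r t
  rw [pinv_spec (hbij (c t)) r]

include hbij in
lemma interleaveMap_injective : Function.Injective (interleaveMap e c M (Q := Q)) := by
  intro x x' h
  funext r t
  rw [← interleaveMap_rec e c M hbij x r t, ← interleaveMap_rec e c M hbij x' r t, h]

include hbij in
lemma interleave_storage (E : V → V → Prop) (C : Set (V → Q)) (hC : IsStorageCode E C)
    (C' : Set ((V × Fin s) → Q'))
    (hC' : ∀ y ∈ C', ∃ x : Fin (k * s) → V → Q,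
      (∀ r, x r ∈ C) ∧ y = interleaveMap e c M x) :
    IsStorageCode (interleavedRel E c M) C' := by
  rintro ⟨t, μ⟩
  obtain ⟨g, hgloc, hgval⟩ := hC t
  refine ⟨fun y => e.symm fun i =>
      g (fun t' => e (y (t', (pinv (hbij (c t')) (M (c t) i μ)).2))
          (pinv (hbij (c t')) (M (c t) i μ)).1), ?_, ?_⟩
  · intro y y' hagree
    refine congrArg e.symm (funext fun i => ?_)
    apply hgloc
    intro t' ht'
    have hedge : interleavedRel E c M (t, μ) (t', (pinv (hbij (c t')) (M (c t) i μ)).2) :=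
      ⟨ht', ⟨M (c t) i μ, Finset.mem_inter.2 ⟨mem_colSet_self _ i μ, mem_colSet_pinv _ _⟩⟩⟩
    rw [hagree _ hedge]
  · intro y hy
    obtain ⟨x, hxC, rfl⟩ := hC' y hy
    have h1 : ∀ i, (fun t' => e (interleaveMap e c M x (t', (pinv (hbij (c t')) (M (c t) i μ)).2))
        (pinv (hbij (c t')) (M (c t) i μ)).1) = x (M (c t) i μ) := by
      intro i
      funext t'
      exact interleaveMap_rec e c M hbij x _ t'
    simp only [h1]
    have h2 : ∀ i, g (x (M (c t) i μ)) = x (M (c t) i μ) t := fun i => hgval _ (hxC _)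
    simp only [h2]
    rfl

end Map

/-- If `G` carries a storage code achieving the MAIS bound, then for the
interleaved graph `Ḡ`: `δ(Ḡ) = s·δ(G)`, the maximum cardinality of a storage
code on `Ḡ` over any alphabet of size `q^k` is `q^{ks(n−δ(G))}`, and products of
maximum DAG sets of `G` with `{1,…,s}` are maximum DAG sets of `Ḡ`. -/
theorem stmt5 {V Q : Type*} [Fintype V] [Fintype Q] (E : V → V → Prop)
    (n q : ℕ) (hn : Fintype.card V = n) (hq : Fintype.card Q = q)
    (C : Finset (V → Q)) (hC : IsStorageCode E (↑C : Set (V → Q)))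
    (hmais : C.card = q ^ (n - maxDagSize E))
    (k s c₀ : ℕ) (hk : 1 ≤ k) (hks : k ≤ s)
    (c : V → Fin c₀) (hcol : ∀ t t' : V, E t t' → c t ≠ c t')
    (M : Fin c₀ → Fin k → Fin s → Fin (k * s)) (hM : IsOrthogonalFamily k s M) :
    maxDagSize (interleavedRel E c M) = s * maxDagSize E ∧
    (∀ (Q' : Type) (_ : Fintype Q'), Fintype.card Q' = q ^ k →
      IsGreatest {m : ℕ | ∃ C' : Finset ((V × Fin s) → Q'),
          IsStorageCode (interleavedRel E c M) (↑C' : Set ((V × Fin s) → Q')) ∧ C'.card = m}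
        (q ^ (k * s * (n - maxDagSize E)))) ∧
    (∀ S : Finset V, IsDagSet E (↑S : Set V) → S.card = maxDagSize E →
      IsDagSet (interleavedRel E c M)
          (↑(S ×ˢ (Finset.univ : Finset (Fin s))) : Set (V × Fin s)) ∧
      (S ×ˢ (Finset.univ : Finset (Fin s))).card = maxDagSize (interleavedRel E c M)) := by
  classical
  obtain ⟨hbij, -⟩ := hM
  obtain ⟨S₀, hS₀, hS₀card⟩ := maxDagSize_spec E
  have hge : s * maxDagSize E ≤ maxDagSize (interleavedRel E c M) := by
    refine le_csSup (dagSizes_bdd _) ⟨S₀ ×ˢ Finset.univ, prod_dag E c M S₀ hS₀, ?_⟩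
    rw [Finset.card_product, Finset.card_univ, Fintype.card_fin, hS₀card, mul_comm]
  have hle : maxDagSize (interleavedRel E c M) ≤ s * maxDagSize E := by
    refine csSup_le (dagSizes_nonempty _) ?_
    rintro m ⟨T, hT, rfl⟩
    exact card_dag_interleaved_le E c M hbij hk T hT
  have hpart1 : maxDagSize (interleavedRel E c M) = s * maxDagSize E := le_antisymm hle hge
  refine ⟨hpart1, ?_, ?_⟩
  · intro Q' iQ' hQ'
    letI := iQ'
    have hQ'' : Fintype.card Q' = q ^ k := hQ'
    have hδn : maxDagSize E ≤ n := hn ▸ maxDagSize_le_card E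
    obtain ⟨d, hd⟩ : ∃ d, n = maxDagSize E + d := ⟨n - maxDagSize E, by omega⟩
    have hnd : n - maxDagSize E = d := by omega
    have hcardQ' : Fintype.card Q' = Fintype.card (Fin k → Q) := by
      rw [hQ'', Fintype.card_fun, Fintype.card_fin, hq]
    constructor
    · let e : Q' ≃ (Fin k → Q) := Fintype.equivOfCardEq hcardQ'
      refine ⟨(Fintype.piFinset fun _ : Fin (k * s) => C).image (interleaveMap e c M), ?_, ?_⟩
      · refine interleave_storage e c M hbij E (↑C) hC _ ?_
        intro y hy
        obtain ⟨x, hx, rfl⟩ := Finset.mem_image.1 (Finset.mem_coe.1 hy)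
        exact ⟨x, fun r => (Fintype.mem_piFinset.1 hx) r, rfl⟩
      · rw [Finset.card_image_of_injective _ (interleaveMap_injective e c M hbij),
          Fintype.card_piFinset]
        simp only [Finset.prod_const, Finset.card_univ, Fintype.card_fin]
        rw [hmais, ← pow_mul]
        congr 1
        rw [hnd]; ring
    · rintro m ⟨C', hst, rfl⟩
      have hb := mais_bound (interleavedRel E c M) C' hst
      rw [Fintype.card_prod, Fintype.card_fin, hn, hpart1, hQ''] at hb
      have harith : n * s - s * maxDagSize E = s * d := by
        have h5 : n * s = s * maxDagSize E + s * d := by rw [hd]; ring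
        rw [h5, Nat.add_sub_cancel_left]
      rw [harith] at hb
      calc C'.card ≤ (q ^ k) ^ (s * d) := hb
        _ = q ^ (k * s * (n - maxDagSize E)) := by
            rw [← pow_mul]
            congr 1
            rw [hnd]; ring
  · intro S hS hScard
    refine ⟨prod_dag E c M S hS, ?_⟩
    rw [Finset.card_product, Finset.card_univ, Fintype.card_fin, hScard, hpart1, mul_comm]
end

section
/- Let R ⊆ ℤ \ {0} be a finite set, let q ≥ 2, and let (c_n)_{n≥1} be a sequence of real numbers such that for every n ≥ 1, every storage code on the finite directed graph Z_{R,n} over an alphabet of size q has rate at most c_n. Then every R-recoverable system X over an alphabet of size q satisfies R_q(X) ≤ limsup_{n→∞} c_n. -/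
/-- An `R`-recoverable system on `ℤ`: every symbol `x_i` is a function of the
symbols in positions `i + R`. -/
def IsRecoverable {Q : Type*} (R : Set ℤ) (X : Set (ℤ → Q)) : Prop :=
  ∀ i : ℤ, ∃ f : (ℤ → Q) → Q,
    (∀ x y : ℤ → Q, (∀ j ∈ R, x (i + j) = y (i + j)) → f x = f y) ∧
    ∀ x ∈ X, f x = x i

/-- `|B_n(X)|`: the number of restrictions of elements of `X` to `{0, …, n−1}`. -/
noncomputable def blockCount {Q : Type*} (X : Set (ℤ → Q)) (n : ℕ) : ℕ :=
  Nat.card ↥((fun x : ℤ → Q => fun i : Fin n => x ((i : ℕ) : ℤ)) '' X)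

/-- The rate `R_q(X) = limsup (1/n) log_q |B_n(X)|` (computed in `EReal`). -/
noncomputable def erate (q : ℕ) {Q : Type*} (X : Set (ℤ → Q)) : EReal :=
  Filter.limsup (fun n : ℕ => ((Real.logb q (blockCount X n) / n : ℝ) : EReal)) Filter.atTop

/-- `Z_{R,n}`: the directed graph on `{0,…,n−1}` with an edge `i → j` iff `j − i ∈ R`. -/
def lineGraphRel (R : Set ℤ) (n : ℕ) : Fin n → Fin n → Prop :=
  fun i j => ((j : ℕ) : ℤ) - ((i : ℕ) : ℤ) ∈ R

open Filter Topology

open Filter Topology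

section Window

variable {Q : Type*}

def window (a : ℤ) (k : ℕ) (x : ℤ → Q) : Fin k → Q := fun i => x (a + (i : ℕ))

theorem window_eq_window_iff {a : ℤ} {k : ℕ} {x y : ℤ → Q} :
    window a k x = window a k y ↔ ∀ j, a ≤ j → j < a + k → x j = y j := by
  refine ⟨fun h j haj hjk => ?_, fun h => funext fun i => h _ (by omega) (by omega)⟩
  have := congrFun h ⟨(j - a).toNat, by omega⟩
  simp only [window] at this
  rwa [Int.toNat_of_nonneg (by omega), add_sub_cancel] at this

theorem blockCount_eq_ncard_window (X : Set (ℤ → Q)) (N : ℕ) :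
    blockCount X N = (window 0 N '' X).ncard := by
  rw [blockCount, Nat.card_coe_set_eq]
  congr
  funext x i
  simp [window]

def splice (x : ℤ → Q) (a : ℤ) {k : ℕ} (y : Fin k → Q) : ℤ → Q := fun j =>
  if h : a ≤ j ∧ j < a + k then y ⟨(j - a).toNat, by omega⟩ else x j

variable {x : ℤ → Q} {a j : ℤ} {k : ℕ} {y y' : Fin k → Q}

theorem splice_of_not_mem (hj : ¬(a ≤ j ∧ j < a + k)) : splice x a y j = x j := dif_neg hj

theorem splice_apply_congr (h : ∀ u : Fin k, a + (u : ℕ) = j → y u = y' u) :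
    splice x a y j = splice x a y' j := by
  unfold splice
  split_ifs with hj
  · exact h _ (by simp; omega)
  · rfl

def boundary (m n : ℕ) (x : ℤ → Q) : (Fin m → Q) × (Fin m → Q) :=
  (window 0 m x, window (m + n) m x)

theorem window_splice_window {m n : ℕ} {x₀ : ℤ → Q} (hbd : boundary m n x = boundary m n x₀) :
    window 0 (n + 2 * m) (splice x₀ m (window m n x)) = window 0 (n + 2 * m) x := by
  simp only [boundary, Prod.mk.injEq, window_eq_window_iff] at hbd
  refine window_eq_window_iff.2 fun j h0 hj => ?_
  by_cases hmid : (m : ℤ) ≤ j ∧ j < m + n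
  · simp only [splice, hmid, and_self, dite_true, window]
    congr 1
    omega
  · rw [splice_of_not_mem hmid]
    rcases lt_or_ge j m with h | h
    · exact (hbd.1 j (by omega) (by omega)).symm
    · exact (hbd.2 j (by omega) (by omega)).symm

end Window

theorem isStorageCode_empty {V Q : Type*} [Nonempty Q] (E : V → V → Prop) :
    IsStorageCode E (∅ : Set (V → Q)) :=
  fun _ => ⟨fun _ => Classical.arbitrary Q, fun _ _ _ => rfl, fun _ h => h.elim⟩

theorem isStorageCode_window_image {Q : Type*} {R : Set ℤ} {X : Set (ℤ → Q)} {m : ℕ}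
    (hm : ∀ r ∈ R, r.natAbs ≤ m) (hX : IsRecoverable R X) (n : ℕ) (x₀ : ℤ → Q) :
    IsStorageCode (lineGraphRel R n)
      (window m n '' {x ∈ X | boundary m n x = boundary m n x₀}) := by
  intro v
  obtain ⟨f, hf_local, hf_rec⟩ := hX (m + (v : ℕ))
  refine ⟨fun y => f (splice x₀ m y), fun y y' hyy => ?_, ?_⟩
  · refine hf_local _ _ fun r hr => splice_apply_congr fun u hu => hyy u ?_
    show ((u : ℕ) : ℤ) - (v : ℕ) ∈ R
    convert hr using 1
    omega
  · rintro _ ⟨x, ⟨hxX, hbd⟩, rfl⟩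
    have hagree := window_eq_window_iff.1 (window_splice_window hbd)
    have hv := v.isLt
    dsimp only
    rw [hf_local _ x fun r hr => have := hm r hr; hagree _ (by omega) (by omega), hf_rec x hxX]
    rfl

theorem ncard_image_le_card_mul {α β γ δ : Type*} [Fintype γ] [Finite δ]
    (X : Set α) (res : α → β) (bd : α → γ) (mid : α → δ) {B : ℝ} (hB : 0 ≤ B)
    (hfactor : ∀ x₀ ∈ X, ∃ F : δ → β, ∀ x ∈ X, bd x = bd x₀ → res x = F (mid x))
    (hfiber : ∀ x₀ ∈ X, ((mid '' {x ∈ X | bd x = bd x₀}).ncard : ℝ) ≤ B) :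
    ((res '' X).ncard : ℝ) ≤ Fintype.card γ * B := by
  have hcover : res '' X = ⋃ g, res '' {x ∈ X | bd x = g} := by
    ext; simp
  have hfiber' : ∀ g, ((res '' {x ∈ X | bd x = g}).ncard : ℝ) ≤ B := by
    intro g
    rcases Set.eq_empty_or_nonempty {x ∈ X | bd x = g} with h | ⟨x₀, hx₀X, rfl⟩
    · simpa [h] using hB
    obtain ⟨F, hF⟩ := hfactor x₀ hx₀X
    have : res '' {x ∈ X | bd x = bd x₀} = F '' (mid '' {x ∈ X | bd x = bd x₀}) := by
      rw [Set.image_image]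
      exact Set.image_congr fun x hx => hF x hx.1 hx.2
    rw [this]
    exact le_trans (by exact_mod_cast Set.ncard_image_le (Set.toFinite _)) (hfiber x₀ hx₀X)
  calc ((res '' X).ncard : ℝ) ≤ ∑ g, ((res '' {x ∈ X | bd x = g}).ncard : ℝ) := by
        rw [hcover]; exact_mod_cast Set.ncard_iUnion_le_of_fintype _
    _ ≤ ∑ _g : γ, B := Finset.sum_le_sum fun g _ => hfiber' g
    _ = Fintype.card γ * B := by simp

theorem blockCount_le {Q : Type*} [Fintype Q] {R : Set ℤ} {X : Set (ℤ → Q)} {m : ℕ}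
    (hm : ∀ r ∈ R, r.natAbs ≤ m) (hX : IsRecoverable R X) (n : ℕ) {B : ℝ} (hB : 0 ≤ B)
    (hcode : ∀ C : Set (Fin n → Q), IsStorageCode (lineGraphRel R n) C → (C.ncard : ℝ) ≤ B) :
    (blockCount X (n + 2 * m) : ℝ) ≤ Fintype.card Q ^ (2 * m) * B := by
  have hcard : Fintype.card ((Fin m → Q) × (Fin m → Q)) = Fintype.card Q ^ (2 * m) := by
    simp [two_mul, pow_add]
  have := ncard_image_le_card_mul X (window 0 (n + 2 * m)) (boundary m n) (window m n) hB
    (fun x₀ _ => ⟨fun y => window 0 (n + 2 * m) (splice x₀ m y),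
      fun _ _ hbd => (window_splice_window hbd).symm⟩)
    (fun x₀ _ => hcode _ (isStorageCode_window_image hm hX n x₀))
  rw [blockCount_eq_ncard_window]
  exact_mod_cast hcard ▸ this

theorem logb_blockCount_le {Q : Type*} [Fintype Q] {R : Set ℤ} {X : Set (ℤ → Q)} {m : ℕ}
    (hm : ∀ r ∈ R, r.natAbs ≤ m) (hX : IsRecoverable R X) {q : ℕ} (hq : 1 < q)
    (hQ : Fintype.card Q = q) {n : ℕ} (hn : 0 < n) {c : ℝ} (hc0 : 0 ≤ c)
    (hc : ∀ C : Finset (Fin n → Q), IsStorageCode (lineGraphRel R n) (↑C : Set (Fin n → Q)) →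
      Real.logb q (C.card : ℝ) / n ≤ c) :
    Real.logb q (blockCount X (n + 2 * m)) ≤ 2 * m + n * c := by
  have hq' : (1 : ℝ) < q := by exact_mod_cast hq
  have hcode : ∀ C : Set (Fin n → Q), IsStorageCode (lineGraphRel R n) C →
      (C.ncard : ℝ) ≤ (q : ℝ) ^ (n * c) := by
    intro C hC
    have h := hc (Set.toFinite C).toFinset (by simpa using hC)
    rw [← Set.ncard_eq_toFinset_card C] at h
    rcases Nat.eq_zero_or_pos C.ncard with h0 | hpos
    · rw [h0, Nat.cast_zero]; positivity
    rwa [div_le_iff₀ (by positivity), mul_comm, Real.logb_le_iff_le_rpow hq' (by positivity)] at h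
  have hB := blockCount_le hm hX n (by positivity) hcode
  rcases Nat.eq_zero_or_pos (blockCount X (n + 2 * m)) with h0 | hpos
  · rw [h0, Nat.cast_zero, Real.logb_zero]; positivity
  rw [Real.logb_le_iff_le_rpow hq' (by positivity), Real.rpow_add (by positivity)]
  convert hB using 2
  rw [hQ, ← Real.rpow_natCast]
  push_cast
  rfl

theorem div_add_le_div_add {a b c n : ℝ} (hn : 0 < n) (hb : 0 ≤ b) (hc : 0 ≤ c)
    (h : a ≤ b + n * c) : a / (n + b) ≤ b / n + c := by
  rw [div_add' _ _ _ hn.ne', div_le_div_iff₀ (by positivity) hn]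
  nlinarith [mul_nonneg (mul_nonneg hb hc) hn.le, sq_nonneg b]

theorem limsup_coe_le_of_le_add {u c ε : ℕ → ℝ} (k : ℕ) (hε : Tendsto ε atTop (𝓝 0))
    (h : ∀ᶠ n in atTop, u (n + k) ≤ ε n + c n) :
    limsup (fun n => (u n : EReal)) atTop ≤ limsup (fun n => (c n : EReal)) atTop := by
  have hε' : limsup (fun n => (ε n : EReal)) atTop = 0 :=
    (EReal.tendsto_coe.2 hε).limsup_eq
  rw [← limsup_nat_add _ k]
  calc limsup (fun n => (u (n + k) : EReal)) atTop
      ≤ limsup ((fun n => (ε n : EReal)) + fun n => (c n : EReal)) atTop :=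
        limsup_le_limsup (h.mono fun n hn => show (u (n + k) : EReal) ≤ ε n + c n by
          exact_mod_cast hn)
    _ ≤ limsup (fun n => (ε n : EReal)) atTop + limsup (fun n => (c n : EReal)) atTop :=
        EReal.limsup_add_le (by simp [hε']) (by simp [hε'])
    _ = limsup (fun n => (c n : EReal)) atTop := by rw [hε', zero_add]

theorem stmt6_general (R : Set ℤ) (hRfin : R.Finite)
    (q : ℕ) (hq : 2 ≤ q) (Q : Type*) [Fintype Q] (hQ : Fintype.card Q = q)
    (c : ℕ → ℝ)
    (hc : ∀ n : ℕ, 1 ≤ n → ∀ C : Finset (Fin n → Q),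
      IsStorageCode (lineGraphRel R n) (↑C : Set (Fin n → Q)) →
      Real.logb q (C.card : ℝ) / n ≤ c n)
    (X : Set (ℤ → Q)) (hX : IsRecoverable R X) :
    erate q X ≤ Filter.limsup (fun n : ℕ => ((c n : ℝ) : EReal)) Filter.atTop := by
  have : Nonempty Q := Fintype.card_pos_iff.mp (by omega)
  obtain ⟨m, hm⟩ : ∃ m : ℕ, ∀ r ∈ R, r.natAbs ≤ m :=
    (hRfin.image Int.natAbs).bddAbove.imp fun _ hm r hr => hm (Set.mem_image_of_mem _ hr)
  have hc0 : ∀ n, 1 ≤ n → 0 ≤ c n := fun n hn => by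
    simpa using hc n hn ∅ (by simpa using isStorageCode_empty _)
  refine limsup_coe_le_of_le_add (2 * m) (ε := fun n => 2 * m / n)
    (tendsto_const_div_atTop_nhds_zero_nat _) ?_
  filter_upwards [eventually_ge_atTop 1] with n hn
  have hlog := logb_blockCount_le hm hX (by omega) hQ hn (hc0 n hn) (hc n hn)
  push_cast
  exact div_add_le_div_add (by positivity) (by positivity) (hc0 n hn) hlog

/-- If every storage code on `Z_{R,n}` over an alphabet of size `q` has rate at
most `c_n`, then every `R`-recoverable system `X` satisfies
`R_q(X) ≤ limsup c_n`. -/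
theorem stmt6 (R : Set ℤ) (hRfin : R.Finite) (hR0 : (0 : ℤ) ∉ R)
    (q : ℕ) (hq : 2 ≤ q) (Q : Type*) [Fintype Q] (hQ : Fintype.card Q = q)
    (c : ℕ → ℝ)
    (hc : ∀ n : ℕ, 1 ≤ n → ∀ C : Finset (Fin n → Q),
      IsStorageCode (lineGraphRel R n) (↑C : Set (Fin n → Q)) →
      Real.logb q (C.card : ℝ) / n ≤ c n)
    (X : Set (ℤ → Q)) (hX : IsRecoverable R X) :
    erate q X ≤ Filter.limsup (fun n : ℕ => ((c n : ℝ) : EReal)) Filter.atTop :=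
  stmt6_general R hRfin q hq Q hQ c hc X hX
end

section
/- Let l, r ≥ 1 be integers, let R = {1, 2, ..., r} ∪ {−1, −2, ..., −l} ⊆ ℤ, and let m = min{l, r}. Then for every q ≥ 2, the supremum of R_q(X) over all R-recoverable systems X over alphabets of size q equals m/(m+1). -/
/-- The rate `R_q(X) = limsup_{n→∞} (1/n) log_q |B_n(X)|`. -/
noncomputable def rate (q : ℕ) {Q : Type*} (X : Set (ℤ → Q)) : ℝ :=
  Filter.limsup (fun n : ℕ => Real.logb q (blockCount X n) / n) Filter.atTop

open Filter Finset

section Logarithms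

variable {q : ℕ}

lemma logb_natCast_nonneg (k : ℕ) : 0 ≤ Real.logb q k :=
  div_nonneg (Real.log_natCast_nonneg k) (Real.log_natCast_nonneg q)

lemma logb_natCast_le_of_le_pow (hq : 1 < q) {k e : ℕ} (h : k ≤ q ^ e) :
    Real.logb q k ≤ e := by
  have hq' : (1 : ℝ) < q := by exact_mod_cast hq
  rcases k.eq_zero_or_pos with rfl | hk
  · simp
  calc Real.logb q k ≤ Real.logb q ((q : ℝ) ^ e) :=
        Real.logb_le_logb_of_le hq' (by exact_mod_cast hk) (by exact_mod_cast h)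
    _ = e := by rw [Real.logb_pow, Real.logb_self_eq_one hq', mul_one]

lemma le_logb_natCast_of_pow_le (hq : 1 < q) {k e : ℕ} (h : q ^ e ≤ k) :
    (e : ℝ) ≤ Real.logb q k := by
  have hq' : (1 : ℝ) < q := by exact_mod_cast hq
  calc (e : ℝ) = Real.logb q ((q : ℝ) ^ e) := by
        rw [Real.logb_pow, Real.logb_self_eq_one hq', mul_one]
    _ ≤ Real.logb q k :=
        Real.logb_le_logb_of_le hq' (by positivity) (by exact_mod_cast h)

end Logarithms

section Rate

variable {q : ℕ} {Q : Type*} {X : Set (ℤ → Q)}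

lemma blockCount_le_card_pow [Fintype Q] (X : Set (ℤ → Q)) (n : ℕ) :
    blockCount X n ≤ Fintype.card Q ^ n := by
  calc blockCount X n ≤ Nat.card (Fin n → Q) := Finite.card_subtype_le _
    _ = Fintype.card Q ^ n := by simp

lemma rate_le_of_logb_le {c C : ℝ}
    (h : ∀ n : ℕ, Real.logb q (blockCount X n) ≤ c * n + C) : rate q X ≤ c := by
  have hbound : (fun n : ℕ => Real.logb q (blockCount X n) / n) ≤ᶠ[atTop]
      fun n : ℕ => c + C / n := by
    filter_upwards [eventually_gt_atTop 0] with n hn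
    rw [div_le_iff₀ (by exact_mod_cast hn), add_mul, div_mul_cancel₀ _ (by positivity)]
    exact h n
  have hlim : Tendsto (fun n : ℕ => c + C / n) atTop (nhds c) := by
    simpa using tendsto_const_nhds.add (tendsto_const_div_atTop_nhds_zero_nat C)
  calc rate q X ≤ limsup (fun n : ℕ => c + C / n) atTop :=
        limsup_le_limsup hbound
          (isCoboundedUnder_le_of_le atTop fun n =>
            div_nonneg (logb_natCast_nonneg _) n.cast_nonneg)
          hlim.isBoundedUnder_le
    _ = c := hlim.limsup_eq

lemma le_rate_of_le_logb [Fintype Q] (hQ : Fintype.card Q = q) (hq : 1 < q) {c : ℝ}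
    (h : ∀ n : ℕ, c * n ≤ Real.logb q (blockCount X n)) : c ≤ rate q X := by
  refine le_limsup_of_frequently_le (eventually_gt_atTop 0 |>.mono fun n hn => ?_).frequently
    (isBoundedUnder_of ⟨1, fun n => ?_⟩)
  · rw [le_div_iff₀ (by exact_mod_cast hn)]
    exact h n
  · refine div_le_one_of_le₀ ?_ n.cast_nonneg
    exact logb_natCast_le_of_le_pow hq (hQ ▸ blockCount_le_card_pow X n)

end Rate

lemma Nat.card_image_le_of_factorsThrough {α β γ : Type*} [Finite γ] {X : Set α}
    {f : α → β} {g : α → γ} (h : ∀ x ∈ X, ∀ y ∈ X, g x = g y → f x = f y) :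
    Nat.card (f '' X) ≤ Nat.card (g '' X) := by
  choose s hsX hs using fun b : g '' X => b.2
  refine Nat.card_le_card_of_surjective (fun b => ⟨f (s b), s b, hsX b, rfl⟩) ?_
  rintro ⟨_, x, hx, rfl⟩
  exact ⟨⟨g x, x, hx, rfl⟩, Subtype.ext (h _ (hsX _) x hx (hs _))⟩

lemma restrict_eq_restrict_iff_eqOn {Q : Type*} {x y : ℤ → Q} {n : ℕ} :
    ((fun i : Fin n => x ((i : ℕ) : ℤ)) = fun i : Fin n => y ((i : ℕ) : ℤ)) ↔
      Set.EqOn x y (Set.Ico 0 n) := by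
  refine ⟨fun h i hi => ?_, fun h => funext fun i => h ⟨by positivity, by exact_mod_cast i.2⟩⟩
  obtain ⟨k, rfl⟩ := Int.eq_ofNat_of_zero_le hi.1
  exact congrFun h ⟨k, by exact_mod_cast hi.2⟩

namespace IsRecoverable

variable {Q : Type*} {R : Set ℤ} {X : Set (ℤ → Q)}

theorem eqOn_of_rank (hX : IsRecoverable R X) {U : Set ℤ} (rk : ℤ → ℕ)
    (hrk : ∀ i ∈ U, ∀ j ∈ R, i + j ∈ U → rk (i + j) < rk i) {x y : ℤ → Q}
    (hx : x ∈ X) (hy : y ∈ X) (hxy : ∀ i ∈ U, ∀ j ∈ R, i + j ∉ U → x (i + j) = y (i + j)) :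
    Set.EqOn x y U := by
  suffices ∀ k, ∀ i ∈ U, rk i = k → x i = y i from fun i hi => this _ i hi rfl
  intro k
  induction k using Nat.strong_induction_on with
  | _ k ih =>
    rintro i hi rfl
    obtain ⟨f, hf_local, hf⟩ := hX i
    rw [← hf x hx, ← hf y hy]
    refine hf_local x y fun j hj => ?_
    by_cases hij : i + j ∈ U
    · exact ih _ (hrk i hi j hj hij) _ hij rfl
    · exact hxy i hi j hj hij

theorem blockCount_le [Fintype Q] (hX : IsRecoverable R X) {n : ℕ} {U : Finset ℤ}
    (rk : ℤ → ℕ) (hU : U ⊆ Finset.Ico 0 n) (hUR : ∀ i ∈ U, ∀ j ∈ R, i + j ∈ Finset.Ico 0 (n : ℤ))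
    (hrk : ∀ i ∈ U, ∀ j ∈ R, i + j ∈ U → rk (i + j) < rk i) :
    blockCount X n ≤ Fintype.card Q ^ (n - #U) := by
  set S := Finset.Ico 0 (n : ℤ) \ U
  have hfactor : ∀ x ∈ X, ∀ y ∈ X, (fun s : S => x s) = (fun s : S => y s) →
      (fun i : Fin n => x ((i : ℕ) : ℤ)) = fun i : Fin n => y ((i : ℕ) : ℤ) := by
    intro x hx y hy hxy
    have hS : Set.EqOn x y S := fun i hi => congrFun hxy ⟨i, hi⟩
    have hUeq : Set.EqOn x y U := hX.eqOn_of_rank rk hrk hx hy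
      fun i hi j hj hij => hS (mem_sdiff.2 ⟨hUR i hi j hj, hij⟩)
    refine restrict_eq_restrict_iff_eqOn.2 fun i hi => ?_
    by_cases hiU : i ∈ U
    · exact hUeq hiU
    · exact hS (mem_sdiff.2 ⟨by simpa using hi, hiU⟩)
  calc blockCount X n ≤ Nat.card ((fun x (s : S) => x s) '' X) :=
        Nat.card_image_le_of_factorsThrough hfactor
    _ ≤ Nat.card (S → Q) := Finite.card_subtype_le _
    _ = Fintype.card Q ^ (n - #U) := by
        rw [Nat.card_eq_fintype_card, Fintype.card_fun, Fintype.card_coe,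
          card_sdiff_of_subset hU, Int.card_Ico, sub_zero, Int.toNat_natCast]

end IsRecoverable

def twoSidedWindow (l r : ℕ) : Set ℤ := {j : ℤ | (1 ≤ j ∧ j ≤ (r : ℤ)) ∨ (-(l : ℤ) ≤ j ∧ j ≤ -1)}

lemma neg_of_mem_twoSidedWindow_of_dvd {l r : ℕ} {j : ℤ} (hrl : r ≤ l)
    (hj : j ∈ twoSidedWindow l r) (hdvd : ((min l r : ℕ) + 1 : ℤ) ∣ j) : j < 0 := by
  rw [min_eq_right hrl] at hdvd
  simp only [twoSidedWindow, Set.mem_ofPred_eq] at hj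
  by_contra hneg
  have := Int.eq_zero_of_abs_lt_dvd hdvd (by rw [abs_lt]; omega)
  omega

lemma pos_of_mem_twoSidedWindow_of_dvd {l r : ℕ} {j : ℤ} (hlr : l ≤ r)
    (hj : j ∈ twoSidedWindow l r) (hdvd : ((min l r : ℕ) + 1 : ℤ) ∣ j) : 0 < j := by
  rw [min_eq_left hlr] at hdvd
  simp only [twoSidedWindow, Set.mem_ofPred_eq] at hj
  by_contra hpos
  have := Int.eq_zero_of_abs_lt_dvd hdvd (by rw [abs_lt]; omega)
  omega

section SparsePositions

variable {l r n : ℕ} {i j : ℤ}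

noncomputable def sparsePositions (l r n : ℕ) : Finset ℤ :=
  {i ∈ Finset.Ico (l : ℤ) (n - r) | i ≡ l [ZMOD (min l r : ℕ) + 1]}

lemma sparsePositions_subset : sparsePositions l r n ⊆ Finset.Ico 0 (n : ℤ) := by
  intro i hi
  simp only [sparsePositions, mem_filter, Finset.mem_Ico] at hi ⊢
  omega

lemma add_mem_Ico_of_mem_sparsePositions (hi : i ∈ sparsePositions l r n)
    (hj : j ∈ twoSidedWindow l r) : i + j ∈ Finset.Ico 0 (n : ℤ) := by
  simp only [sparsePositions, twoSidedWindow, mem_filter, Finset.mem_Ico, Set.mem_ofPred_eq]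
    at hi hj ⊢
  omega

lemma dvd_of_mem_sparsePositions (hi : i ∈ sparsePositions l r n)
    (hij : i + j ∈ sparsePositions l r n) : ((min l r : ℕ) + 1 : ℤ) ∣ j := by
  simp only [sparsePositions, mem_filter] at hi hij
  simpa using (hi.2.trans hij.2.symm).symm.dvd

lemma card_sparsePositions_ge (l r n : ℕ) :
    ((n : ℝ) - l - r) / ((min l r : ℕ) + 1) ≤ #(sparsePositions l r n) := by
  have hcard := Int.Ico_filter_modEq_card (l : ℤ) ((n : ℤ) - r)
    (r := (min l r : ℕ) + 1) (by positivity) l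
  have hceil : ⌈((n : ℚ) - l - r) / ((min l r : ℕ) + 1)⌉ ≤ #(sparsePositions l r n) := by
    rw [sparsePositions, hcard]
    push_cast
    simp only [sub_self, zero_div, Int.ceil_zero, sub_zero]
    exact (le_of_eq (by ring_nf)).trans (le_max_left _ _)
  have hQ : ((n : ℚ) - l - r) / ((min l r : ℕ) + 1) ≤ #(sparsePositions l r n) :=
    (Int.le_ceil _).trans (by exact_mod_cast hceil)
  exact_mod_cast (Rat.cast_le (K := ℝ)).2 hQ

end SparsePositions

namespace IsRecoverable

variable {Q : Type*} [Fintype Q] {X : Set (ℤ → Q)} {l r : ℕ}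

theorem blockCount_le_of_twoSidedWindow (hX : IsRecoverable (twoSidedWindow l r) X) (n : ℕ) :
    blockCount X n ≤ Fintype.card Q ^ (n - #(sparsePositions l r n)) := by
  have hmem : ∀ i ∈ sparsePositions l r n, ∀ j ∈ twoSidedWindow l r, i + j ∈ Finset.Ico 0 (n : ℤ) :=
    fun i hi j hj => add_mem_Ico_of_mem_sparsePositions hi hj
  rcases le_total r l with hrl | hlr
  · refine hX.blockCount_le Int.toNat sparsePositions_subset hmem fun i hi j hj hij => ?_
    have hj0 := neg_of_mem_twoSidedWindow_of_dvd hrl hj (dvd_of_mem_sparsePositions hi hij)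
    have := Finset.mem_Ico.1 (hmem i hi j hj)
    omega
  · refine hX.blockCount_le (fun i => ((n : ℤ) - i).toNat) sparsePositions_subset hmem
      fun i hi j hj hij => ?_
    have hj0 := pos_of_mem_twoSidedWindow_of_dvd hlr hj (dvd_of_mem_sparsePositions hi hij)
    have := Finset.mem_Ico.1 (hmem i hi j hj)
    omega

theorem rate_le_of_twoSidedWindow {q : ℕ} (hQ : Fintype.card Q = q) (hq : 1 < q)
    (hX : IsRecoverable (twoSidedWindow l r) X) :
    rate q X ≤ (min l r : ℕ) / ((min l r : ℕ) + 1 : ℝ) := by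
  refine rate_le_of_logb_le (C := (l + r) / ((min l r : ℕ) + 1 : ℝ)) fun n => ?_
  have hU : #(sparsePositions l r n) ≤ n :=
    (card_le_card sparsePositions_subset).trans (by simp)
  calc Real.logb q (blockCount X n) ≤ (n - #(sparsePositions l r n) : ℕ) :=
        logb_natCast_le_of_le_pow hq (hQ ▸ hX.blockCount_le_of_twoSidedWindow n)
    _ ≤ n - ((n : ℝ) - l - r) / ((min l r : ℕ) + 1) := by
        rw [Nat.cast_sub hU]
        linarith [card_sparsePositions_ge l r n]
    _ = (min l r : ℕ) / ((min l r : ℕ) + 1 : ℝ) * n + (l + r) / ((min l r : ℕ) + 1) := by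
        field_simp
        ring

end IsRecoverable

def blockParity (G : Type*) [AddCommGroup G] (m : ℕ) : Set (ℤ → G) :=
  {x | ∀ k : ℤ, ∑ t ∈ range (m + 1), x ((m + 1 : ℤ) * k + t) = 0}

section BlockParity

variable {G : Type*} [AddCommGroup G] {m : ℕ}

theorem isRecoverable_blockParity {R : Set ℤ} (hR : ∀ j : ℤ, j ≠ 0 → |j| ≤ m → j ∈ R) :
    IsRecoverable R (blockParity G m) := by
  intro i
  set M : ℤ := m + 1
  set o := (i % M).toNat
  have ho : (o : ℤ) = i % M := Int.toNat_of_nonneg (Int.emod_nonneg _ (by omega))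
  have hoM : o < m + 1 := by
    have := Int.emod_lt_of_pos i (show 0 < M by omega)
    omega
  have hi : M * (i / M) + o = i := by rw [ho]; exact Int.mul_ediv_add_emod i M
  refine ⟨fun x => -∑ t ∈ (range (m + 1)).erase o, x (M * (i / M) + t), fun x y hxy => ?_,
    fun x hx => ?_⟩
  · refine congrArg _ (sum_congr rfl fun t ht => ?_)
    obtain ⟨hto, htM⟩ := mem_erase.1 ht
    rw [mem_range] at htM
    have hj := hxy (t - o) (hR _ (by omega) (by rw [abs_le]; omega))
    rwa [show i + (t - o) = M * (i / M) + t by linear_combination -hi] at hj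
  · have hsum := hx (i / M)
    rw [← sum_erase_add _ _ (mem_range.2 hoM), hi] at hsum
    exact neg_eq_of_add_eq_zero_right hsum

theorem isRecoverable_blockParity_min (l r : ℕ) :
    IsRecoverable (twoSidedWindow l r) (blockParity G (min l r)) :=
  isRecoverable_blockParity fun j hj0 hjm => by
    rw [abs_le] at hjm
    simp only [twoSidedWindow, Set.mem_ofPred_eq]
    omega

lemma exists_mem_blockParity_eqOn (y : ℤ → G) :
    ∃ x ∈ blockParity G m, ∀ i : ℤ, ¬ i ≡ m [ZMOD m + 1] → x i = y i := by
  have hmod : ∀ (k : ℤ) (t : ℕ), t ≤ m → ((m + 1 : ℤ) * k + t ≡ m [ZMOD m + 1] ↔ t = m) := by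
    intro k t ht
    rw [Int.ModEq, Int.mul_add_emod_self_left, Int.emod_eq_of_lt (by omega) (by omega),
      Int.emod_eq_of_lt (by omega) (by omega)]
    omega
  refine ⟨fun i => if i ≡ m [ZMOD m + 1] then -∑ t ∈ range m, y (i - m + t) else y i,
    fun k => ?_, fun i hi => if_neg hi⟩
  dsimp only
  rw [sum_range_succ, if_pos ((hmod k m le_rfl).2 rfl), add_neg_eq_zero]
  refine sum_congr rfl fun t ht => ?_
  rw [mem_range] at ht
  rw [if_neg fun h => ht.ne ((hmod k t ht.le).1 h), add_sub_cancel_right]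

theorem pow_le_blockCount_blockParity [Fintype G] (m n : ℕ) :
    Fintype.card G ^ (n - n / (m + 1)) ≤ blockCount (blockParity G m) n := by
  classical
  set F : Finset ℕ := {i ∈ range n | ¬ i ≡ m [MOD m + 1]}
  have hF : #F = n - n / (m + 1) := by
    have hcount := Nat.count_modEq_card n (r := m + 1) (by omega) m
    rw [Nat.count_eq_card_filter_range, Nat.mod_eq_of_lt (by omega : m < m + 1),
      if_neg (by have := Nat.mod_lt n (by omega : 0 < m + 1); omega), add_zero] at hcount
    have := card_filter_add_card_filter_not (s := range n) (fun i => i ≡ m [MOD m + 1])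
    rw [card_range, hcount] at this
    change n / (m + 1) + #F = n at this
    omega
  have hfactor : ∀ x ∈ blockParity G m, ∀ y ∈ blockParity G m,
      (fun i : Fin n => x ((i : ℕ) : ℤ)) = (fun i : Fin n => y ((i : ℕ) : ℤ)) →
        (fun s : F => x ((s : ℕ) : ℤ)) = fun s : F => y ((s : ℕ) : ℤ) := by
    intro x _ y _ hxy
    funext s
    have hs := (mem_filter.1 s.2).1
    rw [mem_range] at hs
    exact restrict_eq_restrict_iff_eqOn.1 hxy ⟨by positivity, by exact_mod_cast hs⟩
  have hsurj : (fun x (s : F) => x ((s : ℕ) : ℤ)) '' blockParity G m = Set.univ := by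
    refine Set.eq_univ_of_forall fun y => ?_
    have hinj : Function.Injective fun s : F => ((s : ℕ) : ℤ) :=
      Nat.cast_injective.comp Subtype.val_injective
    obtain ⟨x, hx, hxy⟩ := exists_mem_blockParity_eqOn (m := m)
      (Function.extend (fun s : F => ((s : ℕ) : ℤ)) y 0)
    refine ⟨x, hx, funext fun s => ?_⟩
    have hs := (mem_filter.1 s.2).2
    rw [← Int.natCast_modEq_iff, Nat.cast_add, Nat.cast_one] at hs
    exact (hxy _ hs).trans (hinj.extend_apply y 0 s)
  calc Fintype.card G ^ (n - n / (m + 1)) = Nat.card (F → G) := by simp [hF]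
    _ = Nat.card ((fun x (s : F) => x ((s : ℕ) : ℤ)) '' blockParity G m) := by
        rw [hsurj, Nat.card_univ]
    _ ≤ blockCount (blockParity G m) n := Nat.card_image_le_of_factorsThrough hfactor

theorem rate_blockParity [Fintype G] {q : ℕ} (hG : Fintype.card G = q) (hq : 1 < q) (m : ℕ) :
    rate q (blockParity G m) = m / (m + 1 : ℝ) := by
  refine le_antisymm ?_ (le_rate_of_le_logb hG hq fun n => ?_)
  · simpa using (isRecoverable_blockParity_min m m).rate_le_of_twoSidedWindow hG hq
  calc m / (m + 1 : ℝ) * n = n - n / (m + 1 : ℝ) := by field_simp; ring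
    _ ≤ (n - n / (m + 1) : ℕ) := by
        rw [Nat.cast_sub (Nat.div_le_self _ _)]
        exact sub_le_sub_left (by exact_mod_cast Nat.cast_div_le) _
    _ ≤ Real.logb q (blockCount (blockParity G m) n) :=
        le_logb_natCast_of_pow_le hq (hG ▸ pow_le_blockCount_blockParity m n)

end BlockParity

theorem stmt7_general (l r : ℕ) (q : ℕ) (hq : 2 ≤ q) :
    sSup {x : ℝ | ∃ (Q : Type) (_ : Fintype Q), Fintype.card Q = q ∧
        ∃ X : Set (ℤ → Q),
          IsRecoverable {j : ℤ | (1 ≤ j ∧ j ≤ (r : ℤ)) ∨ (-(l : ℤ) ≤ j ∧ j ≤ -1)} X ∧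
          rate q X = x} =
      (min l r : ℝ) / ((min l r : ℝ) + 1) := by
  have : NeZero q := ⟨by omega⟩
  rw [← Nat.cast_min]
  refine IsGreatest.csSup_eq ⟨⟨ZMod q, inferInstance, ZMod.card q, blockParity (ZMod q) (min l r),
    isRecoverable_blockParity_min l r, rate_blockParity (ZMod.card q) hq _⟩, ?_⟩
  rintro _ ⟨Q, _, hQ, X, hX, rfl⟩
  exact IsRecoverable.rate_le_of_twoSidedWindow hQ hq hX

/-- For `R = {1,…,r} ∪ {−1,…,−l}` and `m = min{l,r}`, the supremum of rates of
`R`-recoverable systems over alphabets of size `q` is `m/(m+1)`. -/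
theorem stmt7 (l r : ℕ) (hl : 1 ≤ l) (hr : 1 ≤ r) (q : ℕ) (hq : 2 ≤ q) :
    sSup {x : ℝ | ∃ (Q : Type) (_ : Fintype Q), Fintype.card Q = q ∧
        ∃ X : Set (ℤ → Q),
          IsRecoverable {j : ℤ | (1 ≤ j ∧ j ≤ (r : ℤ)) ∨ (-(l : ℤ) ≤ j ∧ j ≤ -1)} X ∧
          rate q X = x} =
      (min l r : ℝ) / ((min l r : ℝ) + 1) :=
  stmt7_general l r q hq
end

section
/- Let 0 < r₁ < r₂ < ... < r_s and 0 < l₁ < l₂ < ... < l_t be positive integers and let R = {−l_t, ..., −l₂, −l₁, r₁, r₂, ..., r_s} ⊆ ℤ. Then for every q ≥ 2, every R-recoverable system X over an alphabet of size q satisfies R_q(X) ≤ 1 − max{ρ({l₁, ..., l_t}), ρ({r₁, ..., r_s})}, where for a set B ⊆ ℤ_{>0}, ρ(B) = limsup_{n→∞} a_n(B)/n and a_n(B) is the maximum cardinality of a subset A ⊆ {0, 1, ..., n−1} such that |a − a'| ∉ B for all a, a' ∈ A. -/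
/-- `a_n(B)`: the maximum cardinality of a `B`-avoiding subset of `{0,…,n−1}`. -/
noncomputable def avoidCount (B : Finset ℕ) (n : ℕ) : ℕ :=
  sSup {m : ℕ | ∃ A : Finset ℕ, A ⊆ Finset.range n ∧
    (∀ a ∈ A, ∀ a' ∈ A, ((a : ℤ) - (a' : ℤ)).natAbs ∉ B) ∧ A.card = m}

/-- `ρ(B) = limsup_{n→∞} a_n(B)/n`. -/
noncomputable def avoidDensity (B : Finset ℕ) : ℝ :=
  Filter.limsup (fun n : ℕ => (avoidCount B n : ℝ) / n) Filter.atTop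

open Filter Finset Real

private lemma avoid_bdd (B : Finset ℕ) (n : ℕ) :
    BddAbove {m : ℕ | ∃ A : Finset ℕ, A ⊆ Finset.range n ∧
      (∀ a ∈ A, ∀ a' ∈ A, ((a : ℤ) - (a' : ℤ)).natAbs ∉ B) ∧ A.card = m} := by
  refine ⟨n, ?_⟩
  rintro m ⟨A, hA, -, rfl⟩
  simpa using Finset.card_le_card hA

private lemma avoid_spec (B : Finset ℕ) (n : ℕ) :
    ∃ A : Finset ℕ, A ⊆ Finset.range n ∧
      (∀ a ∈ A, ∀ a' ∈ A, ((a : ℤ) - (a' : ℤ)).natAbs ∉ B) ∧ A.card = avoidCount B n := by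
  have h := Nat.sSup_mem (s := {m : ℕ | ∃ A : Finset ℕ, A ⊆ Finset.range n ∧
      (∀ a ∈ A, ∀ a' ∈ A, ((a : ℤ) - (a' : ℤ)).natAbs ∉ B) ∧ A.card = m})
    ⟨0, ∅, by simp⟩ (avoid_bdd B n)
  exact h

private lemma le_avoidCount (B : Finset ℕ) (n : ℕ) (A : Finset ℕ) (hA : A ⊆ Finset.range n)
    (hav : ∀ a ∈ A, ∀ a' ∈ A, ((a : ℤ) - (a' : ℤ)).natAbs ∉ B) :
    A.card ≤ avoidCount B n :=
  le_csSup (avoid_bdd B n) ⟨A, hA, hav, rfl⟩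

private lemma avoidCount_le (B : Finset ℕ) (n : ℕ) : avoidCount B n ≤ n := by
  obtain ⟨A, hA, -, hcard⟩ := avoid_spec B n
  rw [← hcard]
  simpa using Finset.card_le_card hA

private lemma avoidCount_subadd (B : Finset ℕ) (m n : ℕ) :
    avoidCount B (m + n) ≤ avoidCount B m + avoidCount B n := by
  classical
  obtain ⟨A, hA, hav, hcard⟩ := avoid_spec B (m + n)
  rw [← hcard]
  set A1 := A.filter (fun a => a < m) with hA1def
  set A2 := (A.filter (fun a => ¬ a < m)).image (fun a => a - m) with hA2def
  have hA1 : A1 ⊆ Finset.range m := by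
    intro a ha
    exact Finset.mem_range.2 (Finset.mem_filter.1 ha).2
  have hav1 : ∀ a ∈ A1, ∀ a' ∈ A1, ((a : ℤ) - (a' : ℤ)).natAbs ∉ B :=
    fun a ha a' ha' => hav a (Finset.mem_filter.1 ha).1 a' (Finset.mem_filter.1 ha').1
  have hA2 : A2 ⊆ Finset.range n := by
    intro b hb
    obtain ⟨a, ha, rfl⟩ := Finset.mem_image.1 hb
    have h1 := Finset.mem_filter.1 ha
    have h2 := Finset.mem_range.1 (hA h1.1)
    have := h1.2
    exact Finset.mem_range.2 (by omega)
  have hav2 : ∀ b ∈ A2, ∀ b' ∈ A2, ((b : ℤ) - (b' : ℤ)).natAbs ∉ B := by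
    intro b hb b' hb'
    obtain ⟨a, ha, rfl⟩ := Finset.mem_image.1 hb
    obtain ⟨a', ha', rfl⟩ := Finset.mem_image.1 hb'
    have h1 := Finset.mem_filter.1 ha
    have h1' := Finset.mem_filter.1 ha'
    have hma : m ≤ a := by omega
    have hma' : m ≤ a' := by omega
    have heq : (((a - m : ℕ) : ℤ) - ((a' - m : ℕ) : ℤ)).natAbs = ((a : ℤ) - (a' : ℤ)).natAbs := by
      omega
    rw [heq]
    exact hav a h1.1 a' h1'.1
  have hcard2 : A2.card = (A.filter (fun a => ¬ a < m)).card := by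
    apply Finset.card_image_of_injOn
    intro a ha b hb hab
    simp only [Finset.coe_filter, Set.mem_setOf_eq] at ha hb
    dsimp only at hab
    omega
  calc A.card = A1.card + (A.filter (fun a => ¬ a < m)).card :=
        (Finset.card_filter_add_card_filter_not _).symm
    _ = A1.card + A2.card := by rw [hcard2]
    _ ≤ avoidCount B m + avoidCount B n :=
        add_le_add (le_avoidCount B m A1 hA1 hav1) (le_avoidCount B n A2 hA2 hav2)

private lemma avoid_tendsto (B : Finset ℕ) :
    Filter.Tendsto (fun n : ℕ => (avoidCount B n : ℝ) / n) Filter.atTop (nhds (avoidDensity B)) := by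
  have h : Subadditive (fun n : ℕ => (avoidCount B n : ℝ)) := by
    intro m n
    dsimp only
    exact_mod_cast avoidCount_subadd B m n
  have hb : BddBelow (Set.range fun n : ℕ => (avoidCount B n : ℝ) / n) := by
    refine ⟨0, ?_⟩
    rintro x ⟨n, rfl⟩
    positivity
  have ht := h.tendsto_lim hb
  have heq : avoidDensity B = h.lim := ht.limsup_eq
  rw [heq]
  exact ht

/-- Key recovery lemma, left-avoiding version. -/
private lemma key_L {Q : Type*} {Lp Rp : Finset ℕ} {X : Set (ℤ → Q)}
    (hX : IsRecoverable
      ({j : ℤ | ∃ x ∈ Lp, j = -(x : ℤ)} ∪ {j : ℤ | ∃ x ∈ Rp, j = (x : ℤ)}) X)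
    (L Rm : ℕ) (hL : ∀ l ∈ Lp, l ≤ L) (hRm : ∀ r ∈ Rp, r ≤ Rm)
    (hRpos : ∀ r ∈ Rp, 0 < r)
    (n : ℕ) (A : Finset ℕ) (hA : A ⊆ Finset.range n)
    (havoid : ∀ a ∈ A, ∀ a' ∈ A, ((a : ℤ) - (a' : ℤ)).natAbs ∉ Lp)
    {x y : ℤ → Q} (hx : x ∈ X) (hy : y ∈ X)
    (hoff : ∀ i : ℕ, i < n + L + Rm → i ∉ A.image (· + L) → x (i : ℤ) = y (i : ℤ)) :
    ∀ i : ℕ, i < n + L + Rm → x (i : ℤ) = y (i : ℤ) := by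
  suffices h : ∀ k : ℕ, ∀ i : ℕ, i < n + L + Rm → n + L + Rm - i < k → x (i : ℤ) = y (i : ℤ) by
    intro i hi
    exact h (n + L + Rm + 1) i hi (by omega)
  intro k
  induction k with
  | zero => intro i hi hk; omega
  | succ k ih =>
    intro i hi hk
    by_cases hiA : i ∈ A.image (· + L)
    · obtain ⟨a, haA, hai⟩ := Finset.mem_image.1 hiA
      have han : a < n := Finset.mem_range.1 (hA haA)
      obtain ⟨f, hf, hfX⟩ := hX (i : ℤ)
      rw [← hfX x hx, ← hfX y hy]
      apply hf
      intro j hj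
      simp only [Set.mem_union, Set.mem_setOf_eq] at hj
      rcases hj with ⟨l, hl, rfl⟩ | ⟨r, hr, rfl⟩
      · -- position i - l, not in A', known directly
        have hlL : l ≤ L := hL l hl
        have hcast : (i : ℤ) + -(l : ℤ) = ((i - l : ℕ) : ℤ) := by omega
        rw [hcast]
        apply hoff (i - l) (by omega)
        intro hmem
        obtain ⟨a', ha'A, ha'⟩ := Finset.mem_image.1 hmem
        have : ((a : ℤ) - (a' : ℤ)).natAbs = l := by omega
        exact havoid a haA a' ha'A (by rw [this]; exact hl)
      · -- position i + r, larger, use induction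
        have hr1 : 0 < r := hRpos r hr
        have hrR : r ≤ Rm := hRm r hr
        have hcast : (i : ℤ) + (r : ℤ) = ((i + r : ℕ) : ℤ) := by omega
        rw [hcast]
        exact ih (i + r) (by omega) (by omega)
    · exact hoff i hi hiA

/-- Key recovery lemma, right-avoiding version. -/
private lemma key_R {Q : Type*} {Lp Rp : Finset ℕ} {X : Set (ℤ → Q)}
    (hX : IsRecoverable
      ({j : ℤ | ∃ x ∈ Lp, j = -(x : ℤ)} ∪ {j : ℤ | ∃ x ∈ Rp, j = (x : ℤ)}) X)
    (L Rm : ℕ) (hL : ∀ l ∈ Lp, l ≤ L) (hRm : ∀ r ∈ Rp, r ≤ Rm)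
    (hLpos : ∀ l ∈ Lp, 0 < l)
    (n : ℕ) (A : Finset ℕ) (hA : A ⊆ Finset.range n)
    (havoid : ∀ a ∈ A, ∀ a' ∈ A, ((a : ℤ) - (a' : ℤ)).natAbs ∉ Rp)
    {x y : ℤ → Q} (hx : x ∈ X) (hy : y ∈ X)
    (hoff : ∀ i : ℕ, i < n + L + Rm → i ∉ A.image (· + L) → x (i : ℤ) = y (i : ℤ)) :
    ∀ i : ℕ, i < n + L + Rm → x (i : ℤ) = y (i : ℤ) := by
  suffices h : ∀ k : ℕ, ∀ i : ℕ, i < n + L + Rm → i < k → x (i : ℤ) = y (i : ℤ) by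
    intro i hi
    exact h (i + 1) i hi (by omega)
  intro k
  induction k with
  | zero => intro i hi hk; omega
  | succ k ih =>
    intro i hi hk
    by_cases hiA : i ∈ A.image (· + L)
    · obtain ⟨a, haA, hai⟩ := Finset.mem_image.1 hiA
      have han : a < n := Finset.mem_range.1 (hA haA)
      obtain ⟨f, hf, hfX⟩ := hX (i : ℤ)
      rw [← hfX x hx, ← hfX y hy]
      apply hf
      intro j hj
      simp only [Set.mem_union, Set.mem_setOf_eq] at hj
      rcases hj with ⟨l, hl, rfl⟩ | ⟨r, hr, rfl⟩
      · -- position i - l, smaller, use induction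
        have hlL : l ≤ L := hL l hl
        have hl1 : 0 < l := hLpos l hl
        have hcast : (i : ℤ) + -(l : ℤ) = ((i - l : ℕ) : ℤ) := by omega
        rw [hcast]
        exact ih (i - l) (by omega) (by omega)
      · -- position i + r, not in A', known directly
        have hrR : r ≤ Rm := hRm r hr
        have hcast : (i : ℤ) + (r : ℤ) = ((i + r : ℕ) : ℤ) := by omega
        rw [hcast]
        apply hoff (i + r) (by omega)
        intro hmem
        obtain ⟨a', ha'A, ha'⟩ := Finset.mem_image.1 hmem
        have : ((a' : ℤ) - (a : ℤ)).natAbs = r := by omega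
        exact havoid a' ha'A a haA (by rw [this]; exact hr)
    · exact hoff i hi hiA

private lemma blockCount_le_of_inj {Q : Type*} [Fintype Q] (X : Set (ℤ → Q)) (N : ℕ)
    (A' : Finset ℕ) (hA' : A' ⊆ Finset.range N)
    (hinj : ∀ x ∈ X, ∀ y ∈ X, (∀ i : ℕ, i < N → i ∉ A' → x (i : ℤ) = y (i : ℤ)) →
      ∀ i : ℕ, i < N → x (i : ℤ) = y (i : ℤ)) :
    blockCount X N ≤ Fintype.card Q ^ (N - A'.card) := by
  classical
  set T : Finset ℕ := Finset.range N \ A' with hT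
  have hTcard : T.card = N - A'.card := by rw [hT, Finset.card_sdiff_of_subset hA', Finset.card_range]
  let φ : ((fun x : ℤ → Q => fun i : Fin N => x ((i : ℕ) : ℤ)) '' X) → ((j : T) → Q) :=
    fun w j => (w : Fin N → Q) ⟨(j : ℕ), Finset.mem_range.1 (Finset.mem_sdiff.1 j.2).1⟩
  have hφ : Function.Injective φ := by
    rintro ⟨w, x, hx, rfl⟩ ⟨w', y, hy, rfl⟩ h
    have hxy : ∀ i : ℕ, i < N → x (i : ℤ) = y (i : ℤ) := by
      apply hinj x hx y hy
      intro i hi hiA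
      have := congrFun h ⟨i, Finset.mem_sdiff.2 ⟨Finset.mem_range.2 hi, hiA⟩⟩
      simpa [φ] using this
    apply Subtype.ext
    funext i
    exact hxy i i.2
  calc blockCount X N
      ≤ Nat.card ((j : T) → Q) := Nat.card_le_card_of_injective φ hφ
    _ = Fintype.card Q ^ (N - A'.card) := by
        rw [Nat.card_eq_fintype_card, Fintype.card_fun, Fintype.card_coe, hTcard]

private lemma rate_le_one_sub {Q : Type*} [Fintype Q] (q : ℕ) (hq : 2 ≤ q)
    (X : Set (ℤ → Q)) (B : Finset ℕ) (C : ℕ)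
    (hkey : ∀ n : ℕ, blockCount X (n + C) ≤ q ^ (n + C - avoidCount B n)) :
    rate q X ≤ 1 - avoidDensity B := by
  have hq1 : (1 : ℝ) < (q : ℝ) := by exact_mod_cast lt_of_lt_of_le one_lt_two hq
  -- pointwise bound on logb for m ≥ C
  have h1 : ∀ m : ℕ, C ≤ m →
      Real.logb q (blockCount X m) ≤ (m : ℝ) - (avoidCount B (m - C) : ℝ) := by
    intro m hm
    have ha : avoidCount B (m - C) ≤ m - C := avoidCount_le B (m - C)
    have hk := hkey (m - C)
    rw [Nat.sub_add_cancel hm] at hk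
    have haR : (avoidCount B (m - C) : ℝ) ≤ (m : ℝ) := by
      exact_mod_cast (ha.trans (Nat.sub_le m C))
    rcases Nat.eq_zero_or_pos (blockCount X m) with h0 | h0
    · rw [h0]
      simp only [Nat.cast_zero, Real.logb_zero]
      linarith
    · calc Real.logb q (blockCount X m)
          ≤ Real.logb q ((q : ℝ) ^ (m - avoidCount B (m - C))) := by
            apply Real.logb_le_logb_of_le hq1 (by exact_mod_cast h0)
            exact_mod_cast hk
        _ = ((m - avoidCount B (m - C) : ℕ) : ℝ) := by
            rw [Real.logb_pow, Real.logb_self_eq_one hq1, mul_one]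
        _ = (m : ℝ) - (avoidCount B (m - C) : ℝ) := by
            have : avoidCount B (m - C) ≤ m := ha.trans (Nat.sub_le m C)
            push_cast [Nat.cast_sub this]
            ring
  -- eventual bound on the rate sequence
  have h2 : ∀ᶠ m : ℕ in atTop, Real.logb q (blockCount X m) / m ≤
      1 - (avoidCount B (m - C) : ℝ) / m := by
    filter_upwards [Filter.eventually_ge_atTop (C + 1)] with m hm
    have hm0 : (0 : ℝ) < m := by exact_mod_cast Nat.lt_of_lt_of_le (Nat.succ_pos _) hm
    have hb := h1 m (by omega)
    rw [div_le_iff₀ hm0]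
    have : (1 - (avoidCount B (m - C) : ℝ) / m) * m = (m : ℝ) - (avoidCount B (m - C) : ℝ) := by
      field_simp
    rw [this]
    exact hb
  -- limit of the right-hand side
  have htd := avoid_tendsto B
  have hsub : Filter.Tendsto (fun m : ℕ => m - C) atTop atTop := tendsto_sub_atTop_nat C
  have h3 : Filter.Tendsto (fun m : ℕ => (avoidCount B (m - C) : ℝ) / ((m - C : ℕ) : ℝ))
      atTop (nhds (avoidDensity B)) := htd.comp hsub
  have h4 : Filter.Tendsto (fun m : ℕ => ((m - C : ℕ) : ℝ) / (m : ℝ)) atTop (nhds 1) := by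
    have hc : Filter.Tendsto (fun m : ℕ => 1 - (C : ℝ) / m) atTop (nhds 1) := by
      have := tendsto_const_div_atTop_nhds_zero_nat (C : ℝ)
      simpa using tendsto_const_nhds.sub this
    apply hc.congr'
    filter_upwards [Filter.eventually_ge_atTop (C + 1)] with m hm
    have hm0 : (m : ℝ) ≠ 0 := Nat.cast_ne_zero.2 (by omega)
    have hcast : ((m - C : ℕ) : ℝ) = (m : ℝ) - (C : ℝ) := by
      push_cast [Nat.cast_sub (by omega : C ≤ m)]
      ring
    rw [hcast]
    field_simp
  have h5 : Filter.Tendsto (fun m : ℕ => (avoidCount B (m - C) : ℝ) / (m : ℝ))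
      atTop (nhds (avoidDensity B)) := by
    have hmul := h3.mul h4
    rw [mul_one] at hmul
    apply hmul.congr'
    filter_upwards [Filter.eventually_ge_atTop (C + 1)] with m hm
    have hm0 : ((m - C : ℕ) : ℝ) ≠ 0 := by
      have : 0 < m - C := by omega
      exact_mod_cast this.ne'
    field_simp
  have h6 : Filter.Tendsto (fun m : ℕ => 1 - (avoidCount B (m - C) : ℝ) / (m : ℝ))
      atTop (nhds (1 - avoidDensity B)) := tendsto_const_nhds.sub h5
  -- conclude
  have hcb : Filter.IsCoboundedUnder (· ≤ ·) atTop
      (fun m : ℕ => Real.logb q (blockCount X m) / m) := by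
    apply Filter.isCoboundedUnder_le_of_le atTop (x := 0)
    intro m
    apply div_nonneg _ (Nat.cast_nonneg m)
    rcases Nat.eq_zero_or_pos (blockCount X m) with h0 | h0
    · rw [h0]; simp
    · exact Real.logb_nonneg hq1 (by exact_mod_cast h0)
  calc rate q X ≤ Filter.limsup (fun m : ℕ => 1 - (avoidCount B (m - C) : ℝ) / (m : ℝ)) atTop :=
        Filter.limsup_le_limsup h2 hcb h6.isBoundedUnder_le
    _ = 1 - avoidDensity B := h6.limsup_eq

/-- For `R = {−l_t,…,−l₁, r₁,…,r_s}` built from positive integers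
`l₁ < ⋯ < l_t` and `r₁ < ⋯ < r_s`, every `R`-recoverable system over an
alphabet of size `q` has rate at most `1 − max{ρ(L), ρ(R)}`. -/
theorem stmt9 (Lp Rp : Finset ℕ) (hLne : Lp.Nonempty) (hRne : Rp.Nonempty)
    (hLpos : ∀ x ∈ Lp, 0 < x) (hRpos : ∀ x ∈ Rp, 0 < x)
    (q : ℕ) (hq : 2 ≤ q) (Q : Type*) [Fintype Q] (hQ : Fintype.card Q = q)
    (X : Set (ℤ → Q))
    (hX : IsRecoverable
      ({j : ℤ | ∃ x ∈ Lp, j = -(x : ℤ)} ∪ {j : ℤ | ∃ x ∈ Rp, j = (x : ℤ)}) X) :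
    rate q X ≤ 1 - max (avoidDensity Lp) (avoidDensity Rp) := by
  classical
  set L := Lp.max' hLne with hLdef
  set Rm := Rp.max' hRne with hRmdef
  have hL : ∀ l ∈ Lp, l ≤ L := fun l hl => Finset.le_max' Lp l hl
  have hRm : ∀ r ∈ Rp, r ≤ Rm := fun r hr => Finset.le_max' Rp r hr
  have hkeyL : ∀ n : ℕ, blockCount X (n + (L + Rm)) ≤ q ^ (n + (L + Rm) - avoidCount Lp n) := by
    intro n
    obtain ⟨A, hA, hav, hcard⟩ := avoid_spec Lp n
    have hsub : A.image (· + L) ⊆ Finset.range (n + L + Rm) := by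
      intro b hb
      obtain ⟨a, ha, rfl⟩ := Finset.mem_image.1 hb
      have := Finset.mem_range.1 (hA ha)
      exact Finset.mem_range.2 (by omega)
    have hbc := blockCount_le_of_inj X (n + L + Rm) (A.image (· + L)) hsub
      (fun x hx y hy hoff => key_L hX L Rm hL hRm hRpos n A hA hav hx hy hoff)
    rw [hQ, Finset.card_image_of_injective A (add_left_injective L), hcard] at hbc
    have heq : n + (L + Rm) = n + L + Rm := by omega
    rw [heq]
    exact hbc
  have hkeyR : ∀ n : ℕ, blockCount X (n + (L + Rm)) ≤ q ^ (n + (L + Rm) - avoidCount Rp n) := by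
    intro n
    obtain ⟨A, hA, hav, hcard⟩ := avoid_spec Rp n
    have hsub : A.image (· + L) ⊆ Finset.range (n + L + Rm) := by
      intro b hb
      obtain ⟨a, ha, rfl⟩ := Finset.mem_image.1 hb
      have := Finset.mem_range.1 (hA ha)
      exact Finset.mem_range.2 (by omega)
    have hbc := blockCount_le_of_inj X (n + L + Rm) (A.image (· + L)) hsub
      (fun x hx y hy hoff => key_R hX L Rm hL hRm hLpos n A hA hav hx hy hoff)
    rw [hQ, Finset.card_image_of_injective A (add_left_injective L), hcard] at hbc
    have heq : n + (L + Rm) = n + L + Rm := by omega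
    rw [heq]
    exact hbc
  have h1 : rate q X ≤ 1 - avoidDensity Lp := rate_le_one_sub q hq X Lp (L + Rm) hkeyL
  have h2 : rate q X ≤ 1 - avoidDensity Rp := rate_le_one_sub q hq X Rp (L + Rm) hkeyR
  rw [← min_sub_sub_left]
  exact le_min h1 h2
end

section
/- Let d ≥ 1, let R ⊆ ℤ^d \ {0} be a finite set, let q ≥ 2, and let (c_n)_{n≥1} be a sequence of real numbers such that for every n ≥ 1, every storage code on the finite directed graph Z^d_{R,n} over an alphabet of size q has rate at most c_n. Then every R-recoverable system X on ℤ^d over an alphabet of size q satisfies R_q(X) ≤ limsup_{n→∞} c_n. -/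
/-- An `R`-recoverable system on `ℤ^d`: every symbol `x_v` is a function of the
symbols in positions `v + R`. -/
def IsRecoverableD {Q : Type*} {d : ℕ} (R : Set (Fin d → ℤ))
    (X : Set ((Fin d → ℤ) → Q)) : Prop :=
  ∀ v : Fin d → ℤ, ∃ f : ((Fin d → ℤ) → Q) → Q,
    (∀ x y : (Fin d → ℤ) → Q, (∀ u ∈ R, x (v + u) = y (v + u)) → f x = f y) ∧
    ∀ x ∈ X, f x = x v

/-- `|B_{[n]^d}(X)|`: restrictions of elements of `X` to the cube `{0,…,n−1}^d`. -/
noncomputable def blockCountD {Q : Type*} {d : ℕ} (X : Set ((Fin d → ℤ) → Q)) (n : ℕ) : ℕ :=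
  Nat.card ↥((fun x : (Fin d → ℤ) → Q =>
    fun w : Fin d → Fin n => x (fun i => ((w i : ℕ) : ℤ))) '' X)

/-- The rate `R_q(X) = limsup_{n→∞} (1/n^d) log_q |B_{[n]^d}(X)|` (in `EReal`). -/
noncomputable def erateD (q : ℕ) {Q : Type*} {d : ℕ} (X : Set ((Fin d → ℤ) → Q)) : EReal :=
  Filter.limsup
    (fun n : ℕ => ((Real.logb q (blockCountD X n) / (n ^ d : ℕ) : ℝ) : EReal)) Filter.atTop

/-- `Z^d_{R,n}`: the directed graph on `{0,…,n−1}^d` with an edge `v → w` iff `w − v ∈ R`. -/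
def cubeGraphRel {d : ℕ} (R : Set (Fin d → ℤ)) (n : ℕ) :
    (Fin d → Fin n) → (Fin d → Fin n) → Prop :=
  fun v w => (fun i => ((w i : ℕ) : ℤ) - ((v i : ℕ) : ℤ)) ∈ R


open Filter Topology

namespace RecoverableSystem

variable {d n m : ℕ} {Q : Type*}

lemma exists_natAbs_le_of_finite {R : Set (Fin d → ℤ)} (hR : R.Finite) :
    ∃ m : ℕ, ∀ u ∈ R, ∀ i, (u i).natAbs ≤ m := by
  obtain ⟨m, hm⟩ := (hR.image fun u => Finset.univ.sup fun i => (u i).natAbs).bddAbove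
  exact ⟨m, fun u hu i => (Finset.le_sup (Finset.mem_univ i)).trans (hm ⟨u, hu, rfl⟩)⟩

def cubeEmbed (w : Fin d → Fin n) : Fin d → ℤ := fun i => ((w i : ℕ) : ℤ)

lemma cubeEmbed_injective : Function.Injective (cubeEmbed (d := d) (n := n)) :=
  fun _ _ h => funext fun i => Fin.ext (by simpa [cubeEmbed] using congrFun h i)

def cube (d n : ℕ) : Set (Fin d → ℤ) := Set.range (cubeEmbed : (Fin d → Fin n) → Fin d → ℤ)

lemma mem_cube_iff {z : Fin d → ℤ} : z ∈ cube d n ↔ ∀ i, 0 ≤ z i ∧ z i < n := by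
  constructor
  · rintro ⟨w, rfl⟩ i
    exact ⟨by simp [cubeEmbed], by simp [cubeEmbed]⟩
  · intro h
    exact ⟨fun i => ⟨(z i).toNat, by have := h i; omega⟩,
      funext fun i => by have := h i; simp [cubeEmbed]; omega⟩

def cubeRestrict (n : ℕ) (x : (Fin d → ℤ) → Q) : (Fin d → Fin n) → Q :=
  fun w => x (cubeEmbed w)

open Classical in
noncomputable def cubePatch (x₀ : (Fin d → ℤ) → Q) (y : (Fin d → Fin n) → Q) :
    (Fin d → ℤ) → Q :=
  fun z => if h : z ∈ cube d n then y h.choose else x₀ z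

lemma cubePatch_cubeEmbed (x₀ : (Fin d → ℤ) → Q) (y : (Fin d → Fin n) → Q)
    (w : Fin d → Fin n) : cubePatch x₀ y (cubeEmbed w) = y w := by
  have h : cubeEmbed w ∈ cube d n := ⟨w, rfl⟩
  rw [cubePatch, dif_pos h, cubeEmbed_injective h.choose_spec]

lemma cubePatch_of_notMem_cube (x₀ : (Fin d → ℤ) → Q) (y : (Fin d → Fin n) → Q)
    {z : Fin d → ℤ} (hz : z ∉ cube d n) : cubePatch x₀ y z = x₀ z := by
  rw [cubePatch, dif_neg hz]

noncomputable def shell (d n m : ℕ) : Finset (Fin d → ℤ) :=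
  Fintype.piFinset (fun _ => Finset.Ico (-(m : ℤ)) (n + m)) \
    Fintype.piFinset (fun _ => Finset.Ico 0 (n : ℤ))

lemma card_shell : (shell d n m).card = (n + 2 * m) ^ d - n ^ d := by
  have hsub : Fintype.piFinset (fun _ : Fin d => Finset.Ico 0 (n : ℤ)) ⊆
      Fintype.piFinset (fun _ => Finset.Ico (-(m : ℤ)) (n + m)) :=
    Fintype.piFinset_subset _ _ fun _ => Finset.Ico_subset_Ico (by omega) (by omega)
  rw [shell, Finset.card_sdiff_of_subset hsub]
  simp only [Fintype.card_piFinset, Int.card_Ico, Finset.prod_const, Finset.card_univ,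
    Fintype.card_fin]
  congr 2
  omega

lemma cubeEmbed_add_mem_shell (w : Fin d → Fin n) {u : Fin d → ℤ}
    (hu : ∀ i, (u i).natAbs ≤ m) (hout : cubeEmbed w + u ∉ cube d n) :
    cubeEmbed w + u ∈ shell d n m := by
  rw [mem_cube_iff] at hout
  simp only [shell, Finset.mem_sdiff, Fintype.mem_piFinset, Finset.mem_Ico]
  refine ⟨fun i => ?_, fun h => hout fun i => h i⟩
  have := hu i
  have := (w i).isLt
  simp only [Pi.add_apply, cubeEmbed]
  omega

lemma isStorageCode_cubeRestrict_image {R : Set (Fin d → ℤ)} {X : Set ((Fin d → ℤ) → Q)}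
    (hX : IsRecoverableD R X) (hm : ∀ u ∈ R, ∀ i, (u i).natAbs ≤ m) (x₀ : (Fin d → ℤ) → Q) :
    IsStorageCode (cubeGraphRel R n)
      (cubeRestrict n '' {x ∈ X | ∀ z ∈ shell d n m, x z = x₀ z}) := by
  intro v
  obtain ⟨g, hg_local, hg⟩ := hX (cubeEmbed v)
  refine ⟨fun y => g (cubePatch x₀ y), fun y₁ y₂ hy => hg_local _ _ fun u hu => ?_, ?_⟩
  · by_cases hin : cubeEmbed v + u ∈ cube d n
    · obtain ⟨w, hw⟩ := hin
      rw [← hw, cubePatch_cubeEmbed, cubePatch_cubeEmbed]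
      apply hy
      show cubeEmbed w - cubeEmbed v ∈ R
      rwa [hw, add_sub_cancel_left]
    · rw [cubePatch_of_notMem_cube _ _ hin, cubePatch_of_notMem_cube _ _ hin]
  · rintro _ ⟨x, ⟨hxX, hx₀⟩, rfl⟩
    refine (hg_local _ _ fun u hu => ?_).trans (hg x hxX)
    by_cases hin : cubeEmbed v + u ∈ cube d n
    · obtain ⟨w, hw⟩ := hin
      rw [← hw, cubePatch_cubeEmbed]
      rfl
    · rw [cubePatch_of_notMem_cube _ _ hin]
      exact (hx₀ _ (cubeEmbed_add_mem_shell v (hm u hu) hin)).symm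

lemma natCard_image_le_card_mul {α β γ : Type*} [Fintype β] (π : α → β) (ρ : α → γ)
    (X : Set α) {K : ℝ} (hK : ∀ b, (Nat.card (ρ '' {x ∈ X | π x = b}) : ℝ) ≤ K) :
    (Nat.card (ρ '' X) : ℝ) ≤ Fintype.card β * K := by
  have hX : ρ '' X = ⋃ b, ρ '' {x ∈ X | π x = b} := by
    ext
    simp
  calc (Nat.card (ρ '' X) : ℝ) ≤ ∑ b, (Nat.card (ρ '' {x ∈ X | π x = b}) : ℝ) := by
        simp only [Nat.card_coe_set_eq, hX]
        exact_mod_cast Set.ncard_iUnion_le_of_fintype _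
    _ ≤ ∑ _b : β, K := Finset.sum_le_sum fun b _ => hK b
    _ = Fintype.card β * K := by simp

lemma le_rpow_of_logb_div_le {b x N c : ℝ} (hb : 1 < b) (hx : 0 ≤ x) (hN : 0 < N)
    (h : Real.logb b x / N ≤ c) : x ≤ b ^ (N * c) := by
  rcases hx.eq_or_lt with rfl | hx
  · positivity
  · rw [div_le_iff₀ hN, mul_comm] at h
    exact (Real.logb_le_iff_le_rpow hb hx).mp h

lemma blockCountD_le_card_mul [Fintype Q] {X : Set ((Fin d → ℤ) → Q)} {K : ℝ}
    (hK : ∀ b : shell d n m → Q,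
      (Nat.card (cubeRestrict n '' {x ∈ X | (fun z : shell d n m => x z) = b}) : ℝ) ≤ K) :
    (blockCountD X n : ℝ) ≤ Fintype.card Q ^ ((n + 2 * m) ^ d - n ^ d) * K := by
  have h := natCard_image_le_card_mul (fun x (z : shell d n m) => x z) (cubeRestrict n) X
    (K := K) fun b => by exact hK b
  rwa [Fintype.card_fun, Fintype.card_coe, card_shell, Nat.cast_pow] at h

section StorageBound

variable [Fintype Q] {q : ℕ} {R : Set (Fin d → ℤ)} {X : Set ((Fin d → ℤ) → Q)} {c : ℝ}

lemma natCard_cubeRestrict_fiber_le (hq : 1 < q) (hX : IsRecoverableD R X)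
    (hm : ∀ u ∈ R, ∀ i, (u i).natAbs ≤ m) (hn : 1 ≤ n)
    (hc : ∀ C : Finset ((Fin d → Fin n) → Q),
      IsStorageCode (cubeGraphRel R n) (↑C : Set ((Fin d → Fin n) → Q)) →
      Real.logb q (C.card : ℝ) / ((n ^ d : ℕ) : ℝ) ≤ c)
    (b : shell d n m → Q) :
    (Nat.card (cubeRestrict n '' {x ∈ X | (fun z : shell d n m => x z) = b}) : ℝ) ≤
      (q : ℝ) ^ (((n ^ d : ℕ) : ℝ) * c) := by
  rcases Set.eq_empty_or_nonempty {x ∈ X | (fun z : shell d n m => x z) = b}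
    with h | ⟨x₀, -, rfl⟩
  · rw [h, Set.image_empty, Nat.card_coe_set_eq, Set.ncard_empty, Nat.cast_zero]
    positivity
  · have hfiber : {x ∈ X | (fun z : shell d n m => x z) = fun z : shell d n m => x₀ z} =
        {x ∈ X | ∀ z ∈ shell d n m, x z = x₀ z} := by
      simp [funext_iff]
    rw [hfiber, Nat.card_coe_set_eq, Set.ncard_eq_toFinset_card _ (Set.toFinite _)]
    refine le_rpow_of_logb_div_le (by exact_mod_cast hq) (Nat.cast_nonneg _) (by positivity)
      (hc _ ?_)
    rw [Set.Finite.coe_toFinset]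
    exact isStorageCode_cubeRestrict_image hX hm x₀

lemma logb_blockCountD_div_le (hq : 1 < q) (hQ : Fintype.card Q = q)
    (hX : IsRecoverableD R X) (hm : ∀ u ∈ R, ∀ i, (u i).natAbs ≤ m) (hn : 1 ≤ n)
    (hc : ∀ C : Finset ((Fin d → Fin n) → Q),
      IsStorageCode (cubeGraphRel R n) (↑C : Set ((Fin d → Fin n) → Q)) →
      Real.logb q (C.card : ℝ) / ((n ^ d : ℕ) : ℝ) ≤ c) :
    Real.logb q (blockCountD X n) / ((n ^ d : ℕ) : ℝ) ≤
      c + (((n + 2 * m) ^ d - n ^ d : ℕ) : ℝ) / ((n ^ d : ℕ) : ℝ) := by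
  have : Nonempty Q := Fintype.card_pos_iff.mp (by omega)
  have hq' : (1 : ℝ) < q := by exact_mod_cast hq
  have hN : (0 : ℝ) < (n ^ d : ℕ) := by positivity
  have hc0 : 0 ≤ c := by
    simpa using hc ∅ fun v => ⟨fun _ => Classical.arbitrary Q, fun _ _ _ => rfl, by simp⟩
  have hcount := blockCountD_le_card_mul (X := X) (natCard_cubeRestrict_fiber_le hq hX hm hn hc)
  rw [hQ, ← Real.rpow_natCast, ← Real.rpow_add (by positivity)] at hcount
  have hlog : Real.logb q (blockCountD X n) ≤ ((n + 2 * m) ^ d - n ^ d : ℕ) + (n ^ d : ℕ) * c := by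
    rcases (blockCountD X n).eq_zero_or_pos with h0 | hpos
    · rw [h0, Nat.cast_zero, Real.logb_zero]
      positivity
    · exact (Real.logb_le_iff_le_rpow hq' (by exact_mod_cast hpos)).mpr hcount
  rw [div_le_iff₀ hN, add_mul, div_mul_cancel₀ _ hN.ne']
  linarith

end StorageBound

lemma tendsto_pow_add_sub_pow_div_pow (d k : ℕ) :
    Tendsto (fun n : ℕ => (((n + k) ^ d - n ^ d : ℕ) : ℝ) / ((n ^ d : ℕ) : ℝ)) atTop (𝓝 0) := by
  have h : Tendsto (fun n : ℕ => (1 + (k : ℝ) / n) ^ d - 1) atTop (𝓝 0) := by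
    simpa using ((tendsto_const_div_atTop_nhds_zero_nat (k : ℝ)).const_add 1).pow d |>.sub_const 1
  refine h.congr' ?_
  filter_upwards [eventually_ge_atTop 1] with n hn
  have hn0 : (0 : ℝ) < n := by exact_mod_cast hn
  push_cast [Nat.pow_le_pow_left (Nat.le_add_right n k) d]
  field_simp
  rw [sub_mul, one_mul, div_pow, div_mul_cancel₀ _ (pow_ne_zero d hn0.ne')]

lemma limsup_coe_le_of_le_add_of_tendsto_zero {α : Type*} {f : Filter α} [f.NeBot]
    {a c e : α → ℝ} (he : Tendsto e f (𝓝 0)) (h : ∀ᶠ n in f, a n ≤ c n + e n) :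
    limsup (fun n => (a n : EReal)) f ≤ limsup (fun n => (c n : EReal)) f := by
  have he' : limsup (fun n => (e n : EReal)) f = 0 := by
    simpa using (EReal.tendsto_coe.mpr he).limsup_eq
  calc limsup (fun n => (a n : EReal)) f
      ≤ limsup ((fun n => (c n : EReal)) + fun n => (e n : EReal)) f :=
        limsup_le_limsup (h.mono fun n hn => show (a n : EReal) ≤ c n + e n by exact_mod_cast hn)
    _ ≤ limsup (fun n => (c n : EReal)) f + limsup (fun n => (e n : EReal)) f :=
        EReal.limsup_add_le (.inr (by simp [he'])) (.inr (by simp [he']))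
    _ = limsup (fun n => (c n : EReal)) f := by rw [he', add_zero]

end RecoverableSystem

open RecoverableSystem in
theorem stmt11_general (d : ℕ) (R : Set (Fin d → ℤ)) (hRfin : R.Finite)
    (q : ℕ) (hq : 2 ≤ q) (Q : Type*) [Fintype Q] (hQ : Fintype.card Q = q)
    (c : ℕ → ℝ)
    (hc : ∀ n : ℕ, 1 ≤ n → ∀ C : Finset ((Fin d → Fin n) → Q),
      IsStorageCode (cubeGraphRel R n) (↑C : Set ((Fin d → Fin n) → Q)) →
      Real.logb q (C.card : ℝ) / ((n ^ d : ℕ) : ℝ) ≤ c n)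
    (X : Set ((Fin d → ℤ) → Q)) (hX : IsRecoverableD R X) :
    erateD q X ≤ Filter.limsup (fun n : ℕ => ((c n : ℝ) : EReal)) Filter.atTop := by
  obtain ⟨m, hm⟩ := exists_natAbs_le_of_finite hRfin
  refine limsup_coe_le_of_le_add_of_tendsto_zero (tendsto_pow_add_sub_pow_div_pow d (2 * m)) ?_
  filter_upwards [eventually_ge_atTop 1] with n hn
  exact logb_blockCountD_div_le (by omega) hQ hX hm hn (hc n hn)

/-- If every storage code on `Z^d_{R,n}` over an alphabet of size `q` has rate
at most `c_n`, then every `R`-recoverable system `X` on `ℤ^d` satisfies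
`R_q(X) ≤ limsup c_n`. -/
theorem stmt11 (d : ℕ) (hd : 1 ≤ d) (R : Set (Fin d → ℤ)) (hRfin : R.Finite)
    (hR0 : (0 : Fin d → ℤ) ∉ R)
    (q : ℕ) (hq : 2 ≤ q) (Q : Type*) [Fintype Q] (hQ : Fintype.card Q = q)
    (c : ℕ → ℝ)
    (hc : ∀ n : ℕ, 1 ≤ n → ∀ C : Finset ((Fin d → Fin n) → Q),
      IsStorageCode (cubeGraphRel R n) (↑C : Set ((Fin d → Fin n) → Q)) →
      Real.logb q (C.card : ℝ) / ((n ^ d : ℕ) : ℝ) ≤ c n)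
    (X : Set ((Fin d → ℤ) → Q)) (hX : IsRecoverableD R X) :
    erateD q X ≤ Filter.limsup (fun n : ℕ => ((c n : ℝ) : EReal)) Filter.atTop :=
  stmt11_general d R hRfin q hq Q hQ c hc X hX
end
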